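/- arXiv:2009.12761 — 7 statements merged into one kernel-verified Lean document; each statement's English description precedes it below -/
import Mathlib

section
/- Let K = ℚ(ζ₉), 𝔩 = (1 − ζ₉)·𝒪_K, ρ the complex conjugation automorphism of K (determined by ρ(ζ₉) = ζ₉⁻¹), and v_𝔩 the 𝔩-adic valuation on K. If r ∈ K^× satisfies v_𝔩(r − 1) ≥ 2, and r·ρ(r) is a rational integer with r·ρ(r) ≡ 1 (mod 3), then v_𝔩(r − 1) ≥ 3. -/
/-!
Write `s = r - 1 = π² u` with `π = 1 - ζ` and `u` integral at `𝔩`. Since `ρ π = -ζ⁻¹ π` with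
`ζ ≡ 1`, and `ρ` acts trivially on the residue field `𝓞 K / 𝔩 = 𝔽₃` (as `𝓞 K = ℤ[ζ]`), we get
`ρ s ≡ s mod 𝔩³`. On the other hand `r ρ(r) = n` gives `s + ρ s = (n - 1) - s ρ(s)`, which lies in
`𝔩³` because `3 ∈ 𝔩³` and `s ρ(s) ∈ 𝔩⁴`. Hence `2 s ∈ 𝔩³`, and `2` is a unit at `𝔩`.
-/

open NumberField IsDedekindDomain WithZero

theorem RingHom.apply_sub_mem_of_adjoin_eq_top {R F : Type*} [CommRing R] [FunLike F R R]
    [RingHomClass F R R] {z : R} (hz : Algebra.adjoin ℤ {z} = ⊤) (σ : F) {I : Ideal R}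
    (h : σ z - z ∈ I) (r : R) : σ r - r ∈ I := by
  have hσ : (Ideal.Quotient.mkₐ ℤ I).comp (σ : R →+* R).toIntAlgHom = Ideal.Quotient.mkₐ ℤ I :=
    AlgHom.ext_of_adjoin_eq_top hz (by simpa [Set.eqOn_singleton, Ideal.Quotient.eq] using h)
  simpa [Ideal.Quotient.eq] using congr($hσ r)

theorem Valuation.map_apply_sub_lt_of_le {K Γ₀ F : Type*} [Field K]
    [LinearOrderedCommGroupWithZero Γ₀] [FunLike F K K] [RingHomClass F K K] (w : Valuation K Γ₀)
    {τ : F} (hτ : ∀ a, w (τ a) = w a) (hres : ∀ a, w a ≤ 1 → w (τ a - a) < 1) {c s : K}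
    (hc : w (τ c - c) < w c) (hs : w s ≤ w c) : w (τ s - s) < w c := by
  have hc0 : c ≠ 0 := by rintro rfl; simp at hc
  have hu : w (s / c) ≤ 1 := by
    rw [map_div₀]; exact div_le_one_of_le₀ hs zero_le
  have hτc0 : τ c ≠ 0 := (map_ne_zero τ).mpr hc0
  have hsplit : τ s - s = (τ c - c) * τ (s / c) + c * (τ (s / c) - s / c) := by
    rw [map_div₀]
    field_simp
    ring
  rw [hsplit]
  refine w.map_add_lt ?_ ?_
  · rw [map_mul, hτ]
    exact (mul_le_of_le_one_right' hu).trans_lt hc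
  · rw [map_mul]
    exact mul_lt_of_lt_one_right ((w.pos_iff).mpr hc0) (hres _ hu)

namespace IsDedekindDomain.HeightOneSpectrum

variable {R : Type*} [CommRing R] [IsDedekindDomain R] {K : Type*} [Field K] [Algebra R K]
  [IsFractionRing R K] (v : HeightOneSpectrum R)

theorem intValuation_map_le {F : Type*} [FunLike F R R] [RingHomClass F R R] {σ : F}
    (hσ : v.asIdeal.map σ ≤ v.asIdeal) (r : R) :
    v.intValuation (σ r) ≤ v.intValuation r := by
  rcases eq_or_ne r 0 with rfl | hr0
  · simp
  set m := multiplicity v.asIdeal (Ideal.span {r})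
  have hrm : r ∈ v.asIdeal ^ m := by
    rw [← intValuation_le_pow_iff_mem, v.intValuation_eq_exp_neg_multiplicity hr0]
  rw [v.intValuation_eq_exp_neg_multiplicity hr0, intValuation_le_pow_iff_mem]
  have hσr := Ideal.mem_map_of_mem σ hrm
  rw [Ideal.map_pow] at hσr
  exact Ideal.pow_right_mono hσ m hσr

theorem intValuation_map_eq (σ : R ≃+* R) (hσ : v.asIdeal.map σ = v.asIdeal) (r : R) :
    v.intValuation (σ r) = v.intValuation r := by
  refine le_antisymm (v.intValuation_map_le hσ.le r) ?_
  have hσ' : v.asIdeal.map σ.symm = v.asIdeal := by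
    nth_rewrite 1 [← hσ]
    exact Ideal.map_of_equiv σ
  simpa using v.intValuation_map_le hσ'.le (σ r)

theorem valuation_map_eq (σ : R ≃+* R) (hσ : v.asIdeal.map σ = v.asIdeal) {F : Type*}
    [FunLike F K K] [RingHomClass F K K] {τ : F}
    (hτ : ∀ r, τ (algebraMap R K r) = algebraMap R K (σ r)) (a : K) :
    v.valuation K (τ a) = v.valuation K a := by
  obtain ⟨n, d, -, rfl⟩ := IsFractionRing.div_surjective (A := R) a
  simp only [map_div₀, hτ, valuation_of_algebraMap, v.intValuation_map_eq σ hσ]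

theorem valuation_map_sub_lt_one {σ : R →+* R} (hσ : ∀ r, σ r - r ∈ v.asIdeal) {F : Type*}
    [FunLike F K K] [RingHomClass F K K] {τ : F}
    (hτ : ∀ r, τ (algebraMap R K r) = algebraMap R K (σ r))
    (hτv : ∀ a, v.valuation K (τ a) = v.valuation K a) {a : K} (ha : v.valuation K a ≤ 1) :
    v.valuation K (τ a - a) < 1 := by
  obtain ⟨b, hb⟩ := v.exists_valuation_sub_lt_of_integer ha 1
  rw [Units.val_one] at hb
  have hsplit : τ a - a =
      algebraMap R K (σ b - b) - τ (algebraMap R K b - a) + (algebraMap R K b - a) := by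
    rw [map_sub τ, hτ, map_sub]; ring
  have hσb : v.valuation K (algebraMap R K (σ b - b)) < 1 :=
    (v.valuation_lt_one_iff_mem _).mpr (hσ b)
  rw [hsplit]
  exact Valuation.map_add_lt _ (Valuation.map_sub_lt _ hσb (by rwa [hτv])) hb

theorem valuation_le_pow_of_dvd {a b : R} {k : ℕ} (h : a ^ k ∣ b) :
    v.valuation K (algebraMap R K b) ≤ v.valuation K (algebraMap R K a) ^ k := by
  obtain ⟨c, rfl⟩ := h
  rw [map_mul, map_mul, map_pow, map_pow]
  exact mul_le_of_le_one_right' (v.valuation_le_one c)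

end IsDedekindDomain.HeightOneSpectrum

namespace IsPrimitiveRoot

section
variable {R : Type*} [CommRing R] [IsDomain R] {η : R} (hη : IsPrimitiveRoot η 9)
include hη

theorem pow_six_add_pow_three_add_one : η ^ 6 + η ^ 3 + 1 = 0 := by
  have := (hη.pow (by norm_num) (by norm_num : 9 = 3 * 3)).geom_sum_eq_zero (by norm_num)
  simp only [Finset.sum_range_succ, Finset.sum_range_zero] at this
  linear_combination this

theorem one_sub_pow_three_dvd_three : (1 - η) ^ 3 ∣ 3 := by
  -- With `x = 1 - η`, `η⁶ + η³ + 1 = 0` reads `3 (1 - x t) = -x⁶`; multiply by `1 + x t + (x t)²`.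
  set x := 1 - η
  set t := 3 - 6 * x + 7 * x ^ 2 - 5 * x ^ 3 + 2 * x ^ 4
  refine ⟨3 * t ^ 3 - x ^ 3 * (1 + x * t + x ^ 2 * t ^ 2), ?_⟩
  linear_combination (1 + x * t + x ^ 2 * t ^ 2) * hη.pow_six_add_pow_three_add_one

end

variable {K : Type*} [Field K] [NumberField K] {ζ : K} (hζ : IsPrimitiveRoot ζ 9)

theorem galRestrict_toInteger {ρ : K ≃ₐ[ℚ] K} (hρ : ρ ζ = ζ⁻¹) :
    galRestrict ℤ ℚ K (𝓞 K) ρ hζ.toInteger = hζ.toInteger ^ 8 := by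
  have h8 : ζ⁻¹ = ζ ^ 8 := inv_eq_of_mul_eq_one_right (by rw [← pow_succ', hζ.pow_eq_one])
  apply RingOfIntegers.ext
  rw [RingOfIntegers.coe_eq_algebraMap, algebraMap_galRestrict_apply]
  change ρ ζ = ((hζ.toInteger ^ 8 : 𝓞 K) : K)
  rw [hρ, h8]
  rfl

variable {ρ : K ≃ₐ[ℚ] K}

theorem galRestrict_one_sub_toInteger (hρ : ρ ζ = ζ⁻¹) :
    galRestrict ℤ ℚ K (𝓞 K) ρ (1 - hζ.toInteger) = -hζ.toInteger ^ 8 * (1 - hζ.toInteger) := by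
  rw [map_sub, map_one, hζ.galRestrict_toInteger hρ]
  linear_combination -hζ.toInteger_isPrimitiveRoot.pow_eq_one

theorem map_galRestrict_span_one_sub_toInteger (hρ : ρ ζ = ζ⁻¹) :
    (Ideal.span {1 - hζ.toInteger}).map (galRestrict ℤ ℚ K (𝓞 K) ρ) =
      Ideal.span {1 - hζ.toInteger} := by
  rw [Ideal.map_span, Set.image_singleton, hζ.galRestrict_one_sub_toInteger hρ]
  exact Ideal.span_singleton_mul_left_unit
    ((hζ.toInteger_isPrimitiveRoot.isUnit (by norm_num)).pow 8).neg _

theorem galRestrict_sub_mem_span_one_sub_toInteger [IsCyclotomicExtension {9} ℚ K]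
    (hρ : ρ ζ = ζ⁻¹) (r : 𝓞 K) :
    galRestrict ℤ ℚ K (𝓞 K) ρ r - r ∈ Ideal.span {1 - hζ.toInteger} := by
  refine RingHom.apply_sub_mem_of_adjoin_eq_top (z := hζ.toInteger) ?_ _ ?_ r
  · simpa using hζ.integralPowerBasis.adjoin_gen_eq_top
  · rw [Ideal.mem_span_singleton, hζ.galRestrict_toInteger hρ]
    have h7 : 1 - hζ.toInteger ∣ 1 - hζ.toInteger ^ 7 := by
      simpa using sub_dvd_pow_sub_pow 1 hζ.toInteger 7
    obtain ⟨q, hq⟩ := h7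
    exact ⟨-hζ.toInteger * q, by linear_combination -hζ.toInteger * hq⟩

variable (v : HeightOneSpectrum (𝓞 K)) (hv : v.asIdeal = Ideal.span {1 - hζ.toInteger})
include hv

theorem valuation_algebraMap_one_sub_toInteger :
    v.valuation K (algebraMap (𝓞 K) K (1 - hζ.toInteger)) = exp (-1) := by
  rw [v.valuation_of_algebraMap, v.intValuation_singleton _ hv]
  exact sub_ne_zero.mpr (hζ.toInteger_isPrimitiveRoot.ne_one (by norm_num)).symm

theorem valuation_map_eq (hρ : ρ ζ = ζ⁻¹) (a : K) : v.valuation K (ρ a) = v.valuation K a :=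
  v.valuation_map_eq (galRestrict ℤ ℚ K (𝓞 K) ρ).toRingEquiv
    (by rw [hv]; exact hζ.map_galRestrict_span_one_sub_toInteger hρ)
    (fun r => (algebraMap_galRestrict_apply ℤ ρ r).symm) a

theorem valuation_map_sub_lt_one [IsCyclotomicExtension {9} ℚ K] (hρ : ρ ζ = ζ⁻¹) {a : K}
    (ha : v.valuation K a ≤ 1) :
    v.valuation K (ρ a - a) < 1 :=
  v.valuation_map_sub_lt_one (σ := (galRestrict ℤ ℚ K (𝓞 K) ρ : 𝓞 K →+* 𝓞 K))
    (fun r => hv ▸ hζ.galRestrict_sub_mem_span_one_sub_toInteger hρ r)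
    (fun r => (algebraMap_galRestrict_apply ℤ ρ r).symm) (hζ.valuation_map_eq v hv hρ) ha

theorem valuation_map_sq_sub_lt (hρ : ρ ζ = ζ⁻¹) :
    v.valuation K (ρ (algebraMap (𝓞 K) K ((1 - hζ.toInteger) ^ 2)) -
        algebraMap (𝓞 K) K ((1 - hζ.toInteger) ^ 2)) <
      v.valuation K (algebraMap (𝓞 K) K ((1 - hζ.toInteger) ^ 2)) := by
  set z := hζ.toInteger
  have hdvd : (1 - z) ^ 3 ∣ (-z ^ 8 * (1 - z)) ^ 2 - (1 - z) ^ 2 := by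
    obtain ⟨q, hq⟩ : 1 - z ∣ 1 - z ^ 16 := by simpa using sub_dvd_pow_sub_pow 1 z 16
    exact ⟨-q, by linear_combination -(1 - z) ^ 2 * hq⟩
  rw [← algebraMap_galRestrict_apply ℤ ρ, ← map_sub, map_pow, hζ.galRestrict_one_sub_toInteger hρ]
  calc _ ≤ v.valuation K (algebraMap (𝓞 K) K (1 - z)) ^ 3 := v.valuation_le_pow_of_dvd hdvd
    _ < v.valuation K (algebraMap (𝓞 K) K ((1 - z) ^ 2)) := by
      rw [map_pow, map_pow, hζ.valuation_algebraMap_one_sub_toInteger v hv, ← exp_nsmul,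
        ← exp_nsmul, exp_lt_exp]
      norm_num

theorem valuation_two : v.valuation K 2 = 1 := by
  have h3 : (3 : 𝓞 K) ∈ v.asIdeal := hv ▸ Ideal.mem_span_singleton.mpr
    ((dvd_pow_self _ three_ne_zero).trans hζ.toInteger_isPrimitiveRoot.one_sub_pow_three_dvd_three)
  have h2 : (2 : 𝓞 K) ∉ v.asIdeal := fun h2 =>
    v.isPrime.ne_top ((Ideal.eq_top_iff_one _).mpr (by convert sub_mem h3 h2; norm_num))
  rw [← map_ofNat (algebraMap (𝓞 K) K) 2]
  exact (v.valuation_eq_one_iff_notMem (K := K)).mpr h2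

theorem valuation_intCast_sub_one_le {n : ℤ} (hn : n ≡ 1 [ZMOD 3]) :
    v.valuation K (n - 1) ≤ exp (-3) := by
  obtain ⟨m, hm⟩ := hn.symm.dvd
  have hnm : (n : K) - 1 = algebraMap (𝓞 K) K (3 * m) := by
    rw [map_mul, map_intCast, map_ofNat]; exact_mod_cast hm
  rw [hnm]
  calc _ ≤ v.valuation K (algebraMap (𝓞 K) K (1 - hζ.toInteger)) ^ 3 :=
        v.valuation_le_pow_of_dvd
          (dvd_mul_of_dvd_left hζ.toInteger_isPrimitiveRoot.one_sub_pow_three_dvd_three _)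
    _ = exp (-3) := by
      rw [hζ.valuation_algebraMap_one_sub_toInteger v hv, ← exp_nsmul]; norm_num

end IsPrimitiveRoot

theorem stmt_3_general (K : Type*) [Field K] [NumberField K] [IsCyclotomicExtension {9} ℚ K]
    (ζ : K) (hζ : IsPrimitiveRoot ζ 9)
    (ρ : K ≃ₐ[ℚ] K) (hρ : ρ ζ = ζ⁻¹)
    (x : 𝓞 K) (hx : (x : K) = 1 - ζ)
    (v : HeightOneSpectrum (𝓞 K)) (hv : v.asIdeal = Ideal.span {x})
    (r : K)
    (h2 : v.valuation K (r - 1) ≤ Multiplicative.ofAdd (-2 : ℤ))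
    (n : ℤ) (hn : r * ρ r = (n : K)) (hn3 : n ≡ 1 [ZMOD 3]) :
    v.valuation K (r - 1) ≤ Multiplicative.ofAdd (-3 : ℤ) := by
  obtain rfl : x = 1 - hζ.toInteger := RingOfIntegers.ext hx
  have hc : v.valuation K (algebraMap (𝓞 K) K ((1 - hζ.toInteger) ^ 2)) = exp (-2) := by
    rw [map_pow, map_pow, hζ.valuation_algebraMap_one_sub_toInteger v hv, ← exp_nsmul]; norm_num
  have hρv := hζ.valuation_map_eq v hv hρ
  change v.valuation K (r - 1) ≤ exp (-2) at h2
  change v.valuation K (r - 1) ≤ exp (-3)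
  -- `ℤᵐ⁰` is discrete: `≤ exp (-3)` means `< exp (-2)`.
  rw [← lt_mul_exp_iff_le exp_ne_zero, ← exp_add, show (-3 : ℤ) + 1 = -2 by norm_num]
  have hconj : v.valuation K (ρ (r - 1) - (r - 1)) < exp (-2) := hc ▸
    (v.valuation K).map_apply_sub_lt_of_le hρv (fun _ => hζ.valuation_map_sub_lt_one v hv hρ)
      (hζ.valuation_map_sq_sub_lt v hv hρ) (hc ▸ h2)
  have hsum : v.valuation K ((r - 1) + ρ (r - 1)) < exp (-2) := by
    rw [show (r - 1) + ρ (r - 1) = (n - 1) - (r - 1) * ρ (r - 1) by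
      rw [map_sub, map_one]; linear_combination hn]
    refine (v.valuation K).map_sub_lt ((hζ.valuation_intCast_sub_one_le v hv hn3).trans_lt
      (exp_lt_exp.mpr (by norm_num))) ?_
    rw [map_mul, hρv]
    calc v.valuation K (r - 1) * v.valuation K (r - 1) ≤ exp (-2) * exp (-2) := mul_le_mul' h2 h2
      _ < exp (-2) := by rw [← exp_add, exp_lt_exp]; norm_num
  have h2s : v.valuation K (2 * (r - 1)) < exp (-2) := by
    rw [show 2 * (r - 1) = ((r - 1) + ρ (r - 1)) - (ρ (r - 1) - (r - 1)) by ring]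
    exact (v.valuation K).map_sub_lt hsum hconj
  rwa [map_mul, hζ.valuation_two v hv, one_mul] at h2s

/-- For `K = ℚ(ζ₉)`, `𝔩 = (1 - ζ₉) 𝓞 K`, `ρ` complex conjugation (`ρ ζ₉ = ζ₉⁻¹`) and
`v` the `𝔩`-adic valuation: if `r ∈ K×` satisfies `v(r - 1) ≥ 2` (i.e. the `ℤₘ₀`-valued
valuation of `r - 1` is at most `ofAdd (-2)`), and `r * ρ r` is a rational integer
congruent to `1 mod 3`, then `v(r - 1) ≥ 3`. -/
theorem stmt_3 (K : Type*) [Field K] [NumberField K] [IsCyclotomicExtension {9} ℚ K]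
    (ζ : K) (hζ : IsPrimitiveRoot ζ 9)
    (ρ : K ≃ₐ[ℚ] K) (hρ : ρ ζ = ζ⁻¹)
    (x : 𝓞 K) (hx : (x : K) = 1 - ζ)
    (v : HeightOneSpectrum (𝓞 K)) (hv : v.asIdeal = Ideal.span {x})
    (r : K) (hr : r ≠ 0)
    (h2 : v.valuation K (r - 1) ≤ Multiplicative.ofAdd (-2 : ℤ))
    (n : ℤ) (hn : r * ρ r = (n : K)) (hn3 : n ≡ 1 [ZMOD 3]) :
    v.valuation K (r - 1) ≤ Multiplicative.ofAdd (-3 : ℤ) :=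
  stmt_3_general K ζ hζ ρ hρ x hx v hv r h2 n hn hn3
end

section
/- Let K = ℚ(ζ₉), 𝔩 = (1 − ζ₉)·𝒪_K, ρ the complex conjugation automorphism of K (determined by ρ(ζ₉) = ζ₉⁻¹), and v_𝔩 the 𝔩-adic valuation on K. If r ∈ K^× satisfies v_𝔩(r) = 0, and r·ρ(r) is a rational integer with r·ρ(r) ≡ 1 (mod 3), then there exists exactly one root of unity w of K (i.e. w = ±ζ₉^m for some 0 ≤ m ≤ 8) such that v_𝔩(w·r − 1) ≥ 4. -/
/-!
Write `λ = 1 - ζ`. The residue field of `λ` is `𝔽₃`, `λ⁴ ∣ 3`, and the binomial expansions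
`ζ ^ c ≡ 1 - cλ (mod λ²)`, `ζ ^ (3c) ≡ 1 - cλ³ (mod λ⁴)` show that `±ζ ^ m ≡ 1 (mod λ⁴)` only
for `+ζ⁰`; this is uniqueness. For existence write `r = a / b` with `λ ∤ ab`. A sign gives
`±a ≡ b (mod λ)`, a power of `ζ` lifts this to `mod λ²` and a power of `ζ³` lifts `mod λ³` to
`mod λ⁴`. The step from `λ²` to `λ³` is forced by the norm: for `b = A - λ²f`, `n ≡ 1 (mod 3)`
gives `A ρ(A) ≡ b ρ(b) (mod λ⁴)`, which modulo `λ³` says `2Af ≡ 0 (mod λ)`, so `λ ∣ f`.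
-/

open NumberField IsDedekindDomain

section Residue

variable {R : Type*} [CommRing R]

theorem pow_succ_dvd_pow_sub_one_sub {l u : R} {j : ℕ} (hj : 1 ≤ j)
    (hu : l ^ (j + 1) ∣ u - (1 - l ^ j)) (k : ℕ) :
    l ^ (j + 1) ∣ u ^ k - (1 - k * l ^ j) := by
  have hpow : l ^ (j + 1) ∣ u ^ k - (1 - l ^ j) ^ k := hu.trans (sub_dvd_pow_sub_pow _ _ k)
  have hbinom : l ^ (j + 1) ∣ (1 - l ^ j) ^ k - (1 - k * l ^ j) := by
    have h := sq_dvd_add_pow_sub_sub (-l ^ j) 1 k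
    simp only [one_pow, one_mul, neg_sq, ← pow_mul] at h
    refine (pow_dvd_pow l (by omega)).trans (h.trans (dvd_of_eq (by ring)))
  simpa using dvd_add hpow hbinom

-- `ψ` with `ψ t = 0 ↔ l ∣ t` stands for the reduction map `R → R ⧸ (l) ≅ 𝔽₃`.
variable {l : R} {ψ : R →+* ZMod 3}

theorem exists_sign_dvd_mul_sub (hψ : ∀ t, ψ t = 0 ↔ l ∣ t) {a b : R} (ha : ¬ l ∣ a)
    (hb : ¬ l ∣ b) :
    ∃ ε : R, (ε = 1 ∨ ε = -1) ∧ l ∣ ε * a - b := by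
  rw [← hψ] at ha hb
  have key : ∀ x y : ZMod 3, x ≠ 0 → y ≠ 0 → x = y ∨ -x = y := by decide
  rcases key _ _ ha hb with h | h
  · exact ⟨1, .inl rfl, (hψ _).mp (by simp [h])⟩
  · exact ⟨-1, .inr rfl, (hψ _).mp (by simp [h])⟩

theorem exists_nat_dvd_mul_sub (hψ : ∀ t, ψ t = 0 ↔ l ∣ t) {A : R} (hA : ¬ l ∣ A) (g : R) :
    ∃ k : ℕ, l ∣ k * A - g := by
  rw [← hψ] at hA
  exact ⟨(ψ g / ψ A).val, (hψ _).mp (by simp [div_mul_cancel₀ _ hA])⟩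

theorem exists_pow_dvd_pow_mul_sub (hψ : ∀ t, ψ t = 0 ↔ l ∣ t) {u A b : R} {j : ℕ} (hj : 1 ≤ j)
    (hu : l ^ (j + 1) ∣ u - (1 - l ^ j)) (hA : ¬ l ∣ A) (h : l ^ j ∣ A - b) :
    ∃ k : ℕ, l ^ (j + 1) ∣ u ^ k * A - b := by
  obtain ⟨g, hg⟩ := h
  obtain ⟨k, hk⟩ := exists_nat_dvd_mul_sub hψ hA g
  refine ⟨k, ?_⟩
  have e : u ^ k * A - b = (u ^ k - (1 - k * l ^ j)) * A - l ^ j * (k * A - g) := by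
    linear_combination hg
  rw [e]
  refine dvd_sub ((pow_succ_dvd_pow_sub_one_sub hj hu k).mul_right A) ?_
  rw [pow_succ]
  exact mul_dvd_mul_left _ hk

theorem apply_map_eq_apply (hψ : ∀ t, ψ t = 0 ↔ l ∣ t) {σ : R →+* R} (hσ : l ∣ σ l) (t : R) :
    ψ (σ t) = ψ t := by
  obtain ⟨q, hq⟩ := (hψ (t - (ψ t).val)).mp (by simp)
  have e : σ t = (ψ t).val + σ l * σ q := by
    have := congrArg σ hq
    rw [map_sub, map_mul, map_natCast] at this
    linear_combination this
  rw [e, map_add, map_mul, (hψ _).mpr hσ]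
  simp

theorem dvd_natCast_iff (hψ : ∀ t, ψ t = 0 ↔ l ∣ t) (k : ℕ) : l ∣ (k : R) ↔ 3 ∣ k := by
  rw [← hψ, map_natCast, ZMod.natCast_eq_zero_iff]

end Residue

section NinthRoots

variable {R : Type*} [CommRing R] {z : R} {ψ : R →+* ZMod 3}

theorem pow_four_dvd_pow_three_sub (h3 : (1 - z) ^ 4 ∣ 3) :
    (1 - z) ^ (3 + 1) ∣ z ^ 3 - (1 - (1 - z) ^ 3) := by
  rw [show z ^ 3 - (1 - (1 - z) ^ 3) = -(3 * ((1 - z) * z)) by ring]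
  exact (h3.mul_right _).neg_right

theorem apply_eq_one (hψ : ∀ t, ψ t = 0 ↔ 1 - z ∣ t) : ψ z = 1 := by
  have := (hψ (1 - z)).mpr dvd_rfl
  rw [map_sub, map_one, sub_eq_zero] at this
  exact this.symm

variable [IsDomain R]

theorem IsPrimitiveRoot.one_sub_pow_four_dvd_three (hz : IsPrimitiveRoot z 9) :
    (1 - z) ^ 4 ∣ 3 := by
  have hω : 1 + z ^ 3 + z ^ 6 = 0 := by
    have h : (z ^ 3 - 1) * (1 + z ^ 3 + z ^ 6) = 0 := by linear_combination hz.pow_eq_one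
    exact (mul_eq_zero.mp h).resolve_left
      (sub_ne_zero.mpr (hz.pow_ne_one_of_pos_of_lt (by norm_num) (by norm_num)))
  have h3 : (3 : R) = (1 - z) ^ 2 * (1 + z + z ^ 2) ^ 2 * (1 + z ^ 3) := by
    linear_combination (2 - z ^ 3) * hω
  have hs : 1 - z ∣ 1 + z + z ^ 2 := by
    have h : (1 - z) ∣ 3 := ⟨(1 - z) * (1 + z + z ^ 2) ^ 2 * (1 + z ^ 3), by rw [h3]; ring⟩
    rw [show 1 + z + z ^ 2 = 3 - (1 - z) * (z + 2) by ring]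
    exact dvd_sub h (dvd_mul_right _ _)
  rw [h3, show (1 - z) ^ 4 = (1 - z) ^ 2 * (1 - z) ^ 2 by ring]
  exact (mul_dvd_mul_left _ (pow_dvd_pow_of_dvd hs 2)).mul_right _

theorem dvd_natCast_of_pow_succ_dvd_one_sub_pow {l u : R} (hl : l ≠ 0) {j k : ℕ} (hj : 1 ≤ j)
    (hu : l ^ (j + 1) ∣ u - (1 - l ^ j)) (h : l ^ (j + 1) ∣ 1 - u ^ k) : l ∣ (k : R) := by
  have := dvd_add h (pow_succ_dvd_pow_sub_one_sub hj hu k)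
  rw [show 1 - u ^ k + (u ^ k - (1 - k * l ^ j)) = l ^ j * k by ring, pow_succ] at this
  exact (mul_dvd_mul_iff_left (pow_ne_zero j hl)).mp this

theorem nine_dvd_of_pow_four_dvd_one_sub_pow (hl : Prime (1 - z)) (h3 : (1 - z) ^ 4 ∣ 3)
    (hψ : ∀ t, ψ t = 0 ↔ 1 - z ∣ t) {c : ℕ} (h : (1 - z) ^ 4 ∣ 1 - z ^ c) : 9 ∣ c := by
  have hc : 3 ∣ c := by
    rw [← dvd_natCast_iff hψ]
    refine dvd_natCast_of_pow_succ_dvd_one_sub_pow (u := z) hl.ne_zero le_rfl (by simp) ?_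
    exact (pow_dvd_pow _ (by norm_num)).trans h
  obtain ⟨c, rfl⟩ := hc
  have hc : 3 ∣ c := by
    rw [pow_mul] at h
    rw [← dvd_natCast_iff hψ]
    exact dvd_natCast_of_pow_succ_dvd_one_sub_pow hl.ne_zero (by norm_num)
      (pow_four_dvd_pow_three_sub h3) h
  exact Nat.mul_dvd_mul_left 3 hc

theorem eq_of_pow_four_dvd_pow_sub_pow (hl : Prime (1 - z)) (h3 : (1 - z) ^ 4 ∣ 3)
    (hψ : ∀ t, ψ t = 0 ↔ 1 - z ∣ t) {m m' : ℕ} (hm : m < 9) (hm' : m' < 9)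
    (h : (1 - z) ^ 4 ∣ z ^ m - z ^ m') : m = m' := by
  wlog hle : m ≤ m' generalizing m m'
  · exact (this hm' hm (dvd_sub_comm.mp h) (le_of_not_ge hle)).symm
  obtain ⟨d, rfl⟩ := Nat.exists_eq_add_of_le hle
  have hz : ¬ 1 - z ∣ z ^ m := by simp [← hψ, apply_eq_one hψ]
  rw [show z ^ m - z ^ (m + d) = z ^ m * (1 - z ^ d) by ring] at h
  have := nine_dvd_of_pow_four_dvd_one_sub_pow hl h3 hψ (hl.pow_dvd_of_dvd_mul_left 4 hz h)
  omega

theorem sign_eq_and_eq_of_pow_four_dvd (hl : Prime (1 - z)) (h3 : (1 - z) ^ 4 ∣ 3)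
    (hψ : ∀ t, ψ t = 0 ↔ 1 - z ∣ t) {a b ε ε' : R} (ha : ¬ 1 - z ∣ a)
    (hε : ε = 1 ∨ ε = -1) (hε' : ε' = 1 ∨ ε' = -1) {m m' : ℕ} (hm : m < 9) (hm' : m' < 9)
    (h : (1 - z) ^ 4 ∣ ε * z ^ m * a - b) (h' : (1 - z) ^ 4 ∣ ε' * z ^ m' * a - b) :
    ε = ε' ∧ m = m' := by
  have hd : (1 - z) ^ 4 ∣ ε * z ^ m - ε' * z ^ m' := by
    refine hl.pow_dvd_of_dvd_mul_right 4 ha ?_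
    convert dvd_sub h h' using 1
    ring
  have hres : ψ ε = ψ ε' := by
    have := (hψ _).mpr ((dvd_pow_self _ four_ne_zero).trans hd)
    simpa [apply_eq_one hψ, sub_eq_zero] using this
  have hεε' : ε = ε' := by
    rcases hε with rfl | rfl <;> rcases hε' with rfl | rfl <;> first
      | rfl
      | (simp only [map_one, map_neg] at hres; exact absurd hres (by decide))
  subst hεε'
  refine ⟨rfl, eq_of_pow_four_dvd_pow_sub_pow hl h3 hψ hm hm' ?_⟩
  have hεε : ε * ε = 1 := by rcases hε with rfl | rfl <;> simp
  convert hd.mul_left ε using 1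
  linear_combination (z ^ m' - z ^ m) * hεε

theorem pow_three_dvd_sub_of_pow_four_dvd_norm_sub (hl : Prime (1 - z))
    (hψ : ∀ t, ψ t = 0 ↔ 1 - z ∣ t) {σ : R →+* R} (hσz : z * σ z = 1) {A b : R}
    (hA : ¬ 1 - z ∣ A) (h2 : (1 - z) ^ 2 ∣ A - b)
    (hN : (1 - z) ^ 4 ∣ A * σ A - b * σ b) : (1 - z) ^ 3 ∣ A - b := by
  obtain ⟨f, hf⟩ := h2
  have hσl : σ (1 - z) = -σ z * (1 - z) := by
    rw [map_sub, map_one]; linear_combination -hσz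
  have hσψ := apply_map_eq_apply hψ (σ := σ) ⟨-σ z, by rw [hσl]; ring⟩
  have hX : (1 - z) ^ 2 ∣ f * σ A + σ z ^ 2 * A * σ f := by
    have e : (1 - z) ^ 2 * (1 - z) ^ 2 * (σ z ^ 2 * f * σ f) + (A * σ A - b * σ b) =
        (1 - z) ^ 2 * (f * σ A + σ z ^ 2 * A * σ f) := by
      rw [show b = A - (1 - z) ^ 2 * f by linear_combination -hf, map_sub, map_mul, map_pow, hσl]
      ring
    have h4 : (1 - z) ^ 2 * (1 - z) ^ 2 ∣ (1 - z) ^ 2 * (f * σ A + σ z ^ 2 * A * σ f) := by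
      rw [← e]
      exact dvd_add (dvd_mul_right _ _) (by rwa [← pow_add])
    exact (mul_dvd_mul_iff_left (pow_ne_zero 2 hl.ne_zero)).mp h4
  have hres : 2 * ψ A * ψ f = 0 := by
    have := (hψ _).mpr ((dvd_pow_self _ two_ne_zero).trans hX)
    simp only [map_add, map_mul, map_pow, hσψ, apply_eq_one hψ] at this
    linear_combination this
  have hf1 : 1 - z ∣ f := by
    rw [← hψ] at hA ⊢
    simpa [hA, show (2 : ZMod 3) ≠ 0 by decide] using hres
  rw [hf, pow_succ]
  exact mul_dvd_mul_left _ hf1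

theorem exists_sign_pow_dvd_mul_sub (hl : Prime (1 - z)) (h3 : (1 - z) ^ 4 ∣ 3)
    (hψ : ∀ t, ψ t = 0 ↔ 1 - z ∣ t) {σ : R →+* R} (hσz : z * σ z = 1) {a b : R}
    (ha : ¬ 1 - z ∣ a) (hb : ¬ 1 - z ∣ b) {n : ℤ} (hn : n ≡ 1 [ZMOD 3])
    (hN : a * σ a = n * (b * σ b)) :
    ∃ ε : R, (ε = 1 ∨ ε = -1) ∧ ∃ m : ℕ, (1 - z) ^ 4 ∣ ε * z ^ m * a - b := by
  obtain ⟨ε, hε, h1⟩ := exists_sign_dvd_mul_sub hψ ha hb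
  have hεε : ε * ε = 1 := by rcases hε with rfl | rfl <;> simp
  have hσε : σ ε = ε := by rcases hε with rfl | rfl <;> simp
  have hunit (k : ℕ) : ¬ 1 - z ∣ z ^ k * (ε * a) := by
    rw [← hψ] at ha ⊢
    rcases hε with rfl | rfl <;> simp [apply_eq_one hψ, ha]
  obtain ⟨k₁, h2⟩ := exists_pow_dvd_pow_mul_sub hψ (u := z) le_rfl (by simp)
    (by simpa using hunit 0) (by simpa using h1)
  set A := z ^ k₁ * (ε * a)
  have hnorm : (1 - z) ^ 4 ∣ A * σ A - b * σ b := by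
    obtain ⟨q, hq⟩ := hn.symm.dvd
    have hq' := congrArg (Int.cast : ℤ → R) hq
    push_cast at hq'
    have e : A * σ A = (z * σ z) ^ k₁ * (ε * ε) * (a * σ a) := by
      simp only [A, map_mul, map_pow, hσε]
      ring
    rw [e, hσz, one_pow, hεε, hN, show (1 : R) * 1 * (n * (b * σ b)) - b * σ b =
      3 * (q * (b * σ b)) by linear_combination b * σ b * hq']
    exact h3.mul_right _
  have h3' := pow_three_dvd_sub_of_pow_four_dvd_norm_sub hl hψ hσz (hunit k₁) h2 hnorm
  obtain ⟨k₂, h4⟩ := exists_pow_dvd_pow_mul_sub hψ (by norm_num) (pow_four_dvd_pow_three_sub h3)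
    (hunit k₁) h3'
  exact ⟨ε, hε, k₁ + 3 * k₂, by convert h4 using 2; ring⟩

theorem existsUnique_sign_pow_dvd_mul_sub (hz : IsPrimitiveRoot z 9) (hl : Prime (1 - z))
    (hψ : ∀ t, ψ t = 0 ↔ 1 - z ∣ t) {σ : R →+* R} (hσz : z * σ z = 1) {a b : R}
    (ha : ¬ 1 - z ∣ a) (hb : ¬ 1 - z ∣ b) {n : ℤ} (hn : n ≡ 1 [ZMOD 3])
    (hN : a * σ a = n * (b * σ b)) :
    ∃! u : R, (∃ ε : R, (ε = 1 ∨ ε = -1) ∧ ∃ m : Fin 9, u = ε * z ^ (m : ℕ)) ∧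
      (1 - z) ^ 4 ∣ u * a - b := by
  have h3 := hz.one_sub_pow_four_dvd_three
  obtain ⟨ε, hε, m, h⟩ := exists_sign_pow_dvd_mul_sub hl h3 hψ hσz ha hb hn hN
  rw [pow_eq_pow_mod m hz.pow_eq_one] at h
  refine ⟨ε * z ^ (m % 9), ⟨⟨ε, hε, ⟨m % 9, Nat.mod_lt _ (by norm_num)⟩, rfl⟩, h⟩, ?_⟩
  rintro _ ⟨⟨ε', hε', m', rfl⟩, h'⟩
  obtain ⟨rfl, hm⟩ := sign_eq_and_eq_of_pow_four_dvd hl h3 hψ ha hε' hε m'.isLt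
    (Nat.mod_lt _ (by norm_num)) h' h
  rw [hm]

end NinthRoots

theorem exists_ringHom_zmod_apply_eq_zero_iff {R : Type*} [CommRing R] {z : R} {p : ℕ}
    [Fact p.Prime] (htop : Algebra.adjoin ℤ {z} = ⊤)
    (hp : ∀ j : ℤ, 1 - z ∣ (j : R) ↔ (p : ℤ) ∣ j) :
    ∃ ψ : R →+* ZMod p, ∀ t, ψ t = 0 ↔ 1 - z ∣ t := by
  -- `ℤ → R ⧸ (1 - z)` is onto since `z ↦ 1`, and its kernel is `pℤ`.
  set I := Ideal.span {1 - z}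
  have : CharP (R ⧸ I) p := ⟨fun k => by
    rw [← map_natCast (Ideal.Quotient.mk I), Ideal.Quotient.eq_zero_iff_mem,
      Ideal.mem_span_singleton, ← Int.cast_natCast, hp, Int.natCast_dvd_natCast]⟩
  have : Nontrivial (R ⧸ I) := CharP.nontrivial_of_char_ne_one (Fact.out : p.Prime).ne_one
  have hz : Ideal.Quotient.mkₐ ℤ I z = 1 :=
    Ideal.Quotient.eq.mpr (Ideal.mem_span_singleton.mpr ⟨-1, by ring⟩)
  have hsurj : Function.Surjective (ZMod.castHom (dvd_refl p) (R ⧸ I)) := by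
    intro q
    obtain ⟨t, rfl⟩ := Ideal.Quotient.mkₐ_surjective ℤ I q
    have ht : Ideal.Quotient.mkₐ ℤ I t ∈ (⊤ : Subalgebra ℤ R).map (Ideal.Quotient.mkₐ ℤ I) :=
      ⟨t, trivial, rfl⟩
    rw [← htop, AlgHom.map_adjoin, Set.image_singleton, hz, Algebra.adjoin_singleton_one,
      Algebra.mem_bot] at ht
    obtain ⟨j, hj⟩ := ht
    exact ⟨j, by simp [← hj]⟩
  let e := RingEquiv.ofBijective _ ⟨(ZMod.castHom (dvd_refl p) (R ⧸ I)).injective, hsurj⟩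
  refine ⟨e.symm.toRingHom.comp (Ideal.Quotient.mk I), fun t => ?_⟩
  simp [Ideal.Quotient.eq_zero_iff_mem, Ideal.mem_span_singleton, I]

section Cyclotomic

variable {K : Type*} [Field K] [NumberField K] [IsCyclotomicExtension {9} ℚ K] {ζ : K}

theorem IsPrimitiveRoot.prime_one_sub_toInteger (hζ : IsPrimitiveRoot ζ 9) :
    Prime (1 - hζ.toInteger) := by
  have : IsCyclotomicExtension {3 ^ (1 + 1)} ℚ K := ‹IsCyclotomicExtension {9} ℚ K›
  have : Fact (Nat.Prime 3) := ⟨Nat.prime_three⟩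
  simpa using (IsPrimitiveRoot.zeta_sub_one_prime (p := 3) (k := 1) hζ).neg

theorem IsPrimitiveRoot.one_sub_toInteger_dvd_intCast_iff (hζ : IsPrimitiveRoot ζ 9) (j : ℤ) :
    1 - hζ.toInteger ∣ (j : 𝓞 K) ↔ (3 : ℤ) ∣ j := by
  have : IsCyclotomicExtension {3 ^ (1 + 1)} ℚ K := ‹IsCyclotomicExtension {9} ℚ K›
  have : Fact (Nat.Prime 3) := ⟨Nat.prime_three⟩
  rw [← neg_sub, neg_dvd]
  exact_mod_cast IsCyclotomicExtension.Rat.zeta_sub_one_dvd_intCast_iff 3 1 (K := K) hζ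

theorem IsPrimitiveRoot.exists_ringHom_zmod_three_apply_eq_zero_iff (hζ : IsPrimitiveRoot ζ 9) :
    ∃ ψ : 𝓞 K →+* ZMod 3, ∀ t, ψ t = 0 ↔ 1 - hζ.toInteger ∣ t :=
  have : Fact (Nat.Prime 3) := ⟨Nat.prime_three⟩
  exists_ringHom_zmod_apply_eq_zero_iff (by simpa using hζ.integralPowerBasis.adjoin_gen_eq_top)
    (by exact_mod_cast hζ.one_sub_toInteger_dvd_intCast_iff)

end Cyclotomic

theorem IsPrimitiveRoot.exists_ringHom_restrict_mul_eq_one {K : Type*} [Field K] [NumberField K]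
    {ζ : K} {k : ℕ} [NeZero k] (hζ : IsPrimitiveRoot ζ k)
    {ρ : K ≃ₐ[ℚ] K} (hρ : ρ ζ = ζ⁻¹) :
    ∃ σ : 𝓞 K →+* 𝓞 K, (∀ t, algebraMap (𝓞 K) K (σ t) = ρ (algebraMap (𝓞 K) K t)) ∧
      hζ.toInteger * σ hζ.toInteger = 1 := by
  let σ : 𝓞 K →+* 𝓞 K := (galRestrict ℤ ℚ K (𝓞 K) ρ).toRingEquiv.toRingHom
  have hσ (t : 𝓞 K) : algebraMap (𝓞 K) K (σ t) = ρ (algebraMap (𝓞 K) K t) :=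
    algebraMap_galRestrict_apply ℤ ρ t
  refine ⟨σ, hσ, FaithfulSMul.algebraMap_injective (𝓞 K) K ?_⟩
  rw [map_mul, hσ, map_one]
  change ζ * ρ ζ = 1
  rw [hρ, mul_inv_cancel₀ (hζ.ne_zero (NeZero.ne k))]

namespace IsDedekindDomain.HeightOneSpectrum

variable {R : Type*} [CommRing R] [IsDedekindDomain R] {K : Type*} [Field K] [Algebra R K]
  [IsFractionRing R K] (v : HeightOneSpectrum R)

theorem exists_mul_eq_of_valuation_eq_one {r : K} (h : v.valuation K r = 1) :
    ∃ a b : R, a ∉ v.asIdeal ∧ b ∉ v.asIdeal ∧ r * algebraMap R K b = algebraMap R K a := by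
  have key {c d : R} (hcd : r * algebraMap R K c = algebraMap R K d) :
      c ∉ v.asIdeal ↔ d ∉ v.asIdeal := by
    rw [← HeightOneSpectrum.intValuation_eq_one_iff, ← HeightOneSpectrum.intValuation_eq_one_iff,
      ← v.valuation_of_algebraMap (K := K), ← v.valuation_of_algebraMap (K := K)]
    change v.valuation K (algebraMap R K c) = 1 ↔ v.valuation K (algebraMap R K d) = 1
    rw [← hcd, map_mul, h, one_mul]
  obtain ⟨n, ⟨d, hd⟩, hnd | hnd⟩ := v.exists_primeCompl_mul_eq_or_mul_eq r
  · exact ⟨n, d, (key hnd).mp hd, hd, hnd⟩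
  · exact ⟨d, n, hd, (key hnd).mpr hd, hnd⟩

theorem valuation_mul_sub_one_le_exp_iff {x : R} (hv : v.asIdeal = Ideal.span {x}) {r : K}
    {a b : R} (hb : b ∉ v.asIdeal) (hr : r * algebraMap R K b = algebraMap R K a) (w : R)
    (k : ℕ) :
    v.valuation K (algebraMap R K w * r - 1) ≤ WithZero.exp (-(k : ℤ)) ↔ x ^ k ∣ w * a - b := by
  have e : algebraMap R K (w * a - b) = (algebraMap R K w * r - 1) * algebraMap R K b := by
    rw [map_sub, map_mul, ← hr]; ring
  rw [← mul_one (v.valuation K _), ← HeightOneSpectrum.intValuation_eq_one_iff.mpr hb,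
    ← v.valuation_of_algebraMap (K := K), ← map_mul, ← e, v.valuation_of_algebraMap,
    v.intValuation_le_pow_iff_dvd, hv, Ideal.span_singleton_pow,
    Ideal.dvd_span_singleton, Ideal.mem_span_singleton]

end IsDedekindDomain.HeightOneSpectrum

theorem stmt_4_general (K : Type*) [Field K] [NumberField K] [IsCyclotomicExtension {9} ℚ K]
    (ζ : K) (hζ : IsPrimitiveRoot ζ 9)
    (ρ : K ≃ₐ[ℚ] K) (hρ : ρ ζ = ζ⁻¹)
    (x : 𝓞 K) (hx : (x : K) = 1 - ζ)
    (v : HeightOneSpectrum (𝓞 K)) (hv : v.asIdeal = Ideal.span {x})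
    (r : K)
    (h0 : v.valuation K r = 1)
    (n : ℤ) (hn : r * ρ r = (n : K)) (hn3 : n ≡ 1 [ZMOD 3]) :
    ∃! w : K, (∃ ε : K, (ε = 1 ∨ ε = -1) ∧ ∃ m : Fin 9, w = ε * ζ ^ (m : ℕ)) ∧
      v.valuation K (w * r - 1) ≤ Multiplicative.ofAdd (-4 : ℤ) := by
  obtain rfl : x = 1 - hζ.toInteger := RingOfIntegers.ext (by rw [hx]; rfl)
  obtain ⟨ψ, hψ⟩ := hζ.exists_ringHom_zmod_three_apply_eq_zero_iff
  obtain ⟨σ, hσ, hσz⟩ := hζ.exists_ringHom_restrict_mul_eq_one hρ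
  obtain ⟨a, b, ha, hb, hrab⟩ := v.exists_mul_eq_of_valuation_eq_one h0
  have hN : a * σ a = n * (b * σ b) := by
    apply FaithfulSMul.algebraMap_injective (𝓞 K) K
    simp only [map_mul, map_intCast, hσ, ← hrab, ← hn]
    ring
  have hval := v.valuation_mul_sub_one_le_exp_iff hv hb hrab
  rw [hv, Ideal.mem_span_singleton] at ha hb
  obtain ⟨u, ⟨⟨ε, hε, m, rfl⟩, hu⟩, huniq⟩ := existsUnique_sign_pow_dvd_mul_sub
    hζ.toInteger_isPrimitiveRoot hζ.prime_one_sub_toInteger hψ hσz ha hb hn3 hN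
  have hcoe (e : 𝓞 K) (k : ℕ) :
      algebraMap (𝓞 K) K (e * hζ.toInteger ^ k) = algebraMap (𝓞 K) K e * ζ ^ k := by
    rw [map_mul, map_pow]; rfl
  refine ⟨algebraMap (𝓞 K) K ε * ζ ^ (m : ℕ), ⟨⟨_, ?_, m, rfl⟩, ?_⟩, ?_⟩
  · rcases hε with rfl | rfl <;> simp
  · rw [← hcoe]
    exact (hval _ 4).mpr hu
  · rintro w ⟨⟨ε', hε', m', rfl⟩, hw⟩
    obtain ⟨e, he, rfl⟩ : ∃ e : 𝓞 K, (e = 1 ∨ e = -1) ∧ algebraMap (𝓞 K) K e = ε' := by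
      rcases hε' with rfl | rfl
      exacts [⟨1, .inl rfl, map_one _⟩, ⟨-1, .inr rfl, by simp⟩]
    rw [← hcoe] at hw ⊢
    rw [huniq _ ⟨⟨e, he, m', rfl⟩, (hval _ 4).mp hw⟩, hcoe]

/-- For `K = ℚ(ζ₉)`, `𝔩 = (1 - ζ₉) 𝓞 K`, `ρ` complex conjugation (`ρ ζ₉ = ζ₉⁻¹`) and
`v` the `𝔩`-adic valuation: if `r ∈ K×` satisfies `v(r) = 0` (i.e. the `ℤₘ₀`-valued
valuation of `r` is `1`), and `r * ρ r` is a rational integer congruent to `1 mod 3`,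
then there is exactly one root of unity `w` of `K` (i.e. `w = ε * ζ₉ ^ m` with
`ε ∈ {1, -1}` and `0 ≤ m ≤ 8`) such that `v(w * r - 1) ≥ 4`. -/
theorem stmt_4 (K : Type*) [Field K] [NumberField K] [IsCyclotomicExtension {9} ℚ K]
    (ζ : K) (hζ : IsPrimitiveRoot ζ 9)
    (ρ : K ≃ₐ[ℚ] K) (hρ : ρ ζ = ζ⁻¹)
    (x : 𝓞 K) (hx : (x : K) = 1 - ζ)
    (v : HeightOneSpectrum (𝓞 K)) (hv : v.asIdeal = Ideal.span {x})
    (r : K) (hr : r ≠ 0)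
    (h0 : v.valuation K r = 1)
    (n : ℤ) (hn : r * ρ r = (n : K)) (hn3 : n ≡ 1 [ZMOD 3]) :
    ∃! w : K, (∃ ε : K, (ε = 1 ∨ ε = -1) ∧ ∃ m : Fin 9, w = ε * ζ ^ (m : ℕ)) ∧
      v.valuation K (w * r - 1) ≤ Multiplicative.ofAdd (-4 : ℤ) :=
  stmt_4_general K ζ hζ ρ hρ x hx v hv r h0 n hn hn3
end

section
/- Let R = ℤ[√−2] (the ring of integers of ℚ(√−2)), let η = √−2, and consider the quotient ring R/(η⁵) (note η⁵ = 4η). The unit group (R/(η⁵))^× has order 16 and is the internal direct product of the cyclic subgroups generated by the classes of 1 + η, −1, and 5, which have orders 4, 2, and 2 respectively; in particular (R/(η⁵))^× is isomorphic to ℤ/4ℤ × ℤ/2ℤ × ℤ/2ℤ. -/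
/-!
Since `η⁵ = 4η`, an element `a + bη` lies in `(η⁵)` exactly when `8 ∣ a` and `4 ∣ b`, so a class
of `ℤ[√-2] ⧸ (η⁵)` is determined by its residue `(a mod 8, b mod 4)`. A class is a unit only if
`a` is odd: for even `a` the real part `ac - 2bd` of `(a + bη)(c + dη)` is even, so the product
is never `≡ 1`. This leaves sixteen residues, and the sixteen products
`(1 + η)ⁱ (-1)ʲ 5ᵏ` with `i < 4`, `j, k < 2` hit each of them exactly once. Hence every unit has
a unique such normal form, and sending the exponents to `ZMod 4 × ZMod 2 × ZMod 2` is an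
isomorphism because the three generators have orders `4`, `2`, `2`.
-/

def zmodPowHom {G : Type*} [Group G] (x : G) {n : ℕ} (hx : x ^ n = 1) :
    Multiplicative (ZMod n) →* G :=
  AddMonoidHom.toMultiplicativeLeft
    (ZMod.lift n ⟨zmultiplesHom (Additive G) (Additive.ofMul x), by simp [← ofMul_pow, hx]⟩)

theorem zmodPowHom_apply {G : Type*} [Group G] (x : G) {n : ℕ} [NeZero n] (hx : x ^ n = 1)
    (p : Multiplicative (ZMod n)) : zmodPowHom x hx p = x ^ p.toAdd.val := by
  have h := ZMod.lift_coe n ⟨zmultiplesHom (Additive G) (Additive.ofMul x),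
    by simp [← ofMul_pow, hx]⟩ (p.toAdd.val : ℤ)
  rw [Int.cast_natCast, ZMod.natCast_zmod_val] at h
  simpa [zmodPowHom, -ZMod.natCast_val] using congrArg Additive.toMul h

theorem CommGroup.nonempty_mulEquiv_zmod_prod_of_existsUnique {G : Type*} [CommGroup G]
    {a b c : ℕ} [NeZero a] [NeZero b] [NeZero c] {x y z : G}
    (hx : x ^ a = 1) (hy : y ^ b = 1) (hz : z ^ c = 1)
    (h : ∀ g : G, ∃! t : Fin a × Fin b × Fin c,
      g = x ^ (t.1 : ℕ) * y ^ (t.2.1 : ℕ) * z ^ (t.2.2 : ℕ)) :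
    Nonempty (G ≃* Multiplicative (ZMod a) × Multiplicative (ZMod b) × Multiplicative (ZMod c)) := by
  set φ := (zmodPowHom x hx).coprod ((zmodPowHom y hy).coprod (zmodPowHom z hz))
  have hφ : ∀ p, φ p = x ^ p.1.toAdd.val * y ^ p.2.1.toAdd.val * z ^ p.2.2.toAdd.val := by
    rintro ⟨p, q, r⟩
    simp only [φ, MonoidHom.coprod_apply, zmodPowHom_apply, mul_assoc]
  refine ⟨(MulEquiv.ofBijective φ ⟨fun p q hpq => ?_, fun g => ?_⟩).symm⟩
  · obtain ⟨t, -, ht⟩ := h (φ p)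
    have hp := ht (⟨_, ZMod.val_lt p.1.toAdd⟩, ⟨_, ZMod.val_lt p.2.1.toAdd⟩,
      ⟨_, ZMod.val_lt p.2.2.toAdd⟩) (hφ p)
    have hq := ht (⟨_, ZMod.val_lt q.1.toAdd⟩, ⟨_, ZMod.val_lt q.2.1.toAdd⟩,
      ⟨_, ZMod.val_lt q.2.2.toAdd⟩) (hpq ▸ hφ q)
    simp only [← hq, Prod.mk.injEq, Fin.mk.injEq, ZMod.val_injective _ |>.eq_iff] at hp
    exact Prod.ext hp.1 (Prod.ext hp.2.1 hp.2.2)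
  · obtain ⟨t, ht, -⟩ := h g
    refine ⟨(.ofAdd (t.1 : ℕ), .ofAdd (t.2.1 : ℕ), .ofAdd (t.2.2 : ℕ)), ?_⟩
    simp [hφ, ZMod.val_natCast, Nat.mod_eq_of_lt, ht]

theorem Units.nonempty_mulEquiv_zmod_prod_of_existsUnique {M : Type*} [CommMonoid M]
    {a b c : ℕ} [NeZero a] [NeZero b] [NeZero c] {x y z : M}
    (hx : x ^ a = 1) (hy : y ^ b = 1) (hz : z ^ c = 1)
    (h : ∀ u : Mˣ, ∃! t : Fin a × Fin b × Fin c,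
      (u : M) = x ^ (t.1 : ℕ) * y ^ (t.2.1 : ℕ) * z ^ (t.2.2 : ℕ)) :
    Nonempty (Mˣ ≃* Multiplicative (ZMod a) × Multiplicative (ZMod b) × Multiplicative (ZMod c)) :=
  CommGroup.nonempty_mulEquiv_zmod_prod_of_existsUnique
    (Units.pow_ofPowEqOne hx (NeZero.ne a)) (Units.pow_ofPowEqOne hy (NeZero.ne b))
    (Units.pow_ofPowEqOne hz (NeZero.ne c)) fun u => by simpa [Units.ext_iff] using h u

namespace Zsqrtd

local notation "η" => (sqrtd : ℤ√(-2))
local notation "R₅" => ℤ√(-2) ⧸ Ideal.span {η ^ 5}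
local notation "mk₅" => Ideal.Quotient.mk (Ideal.span {η ^ 5})

theorem sqrtd_pow_five : η ^ 5 = ⟨0, 4⟩ := by
  ext <;> simp [pow_succ]

theorem sqrtd_pow_five_dvd_iff (z : ℤ√(-2)) : η ^ 5 ∣ z ↔ 8 ∣ z.re ∧ 4 ∣ z.im := by
  rw [sqrtd_pow_five]
  constructor
  · rintro ⟨w, rfl⟩
    exact ⟨⟨-w.im, by simp⟩, ⟨w.re, by simp⟩⟩
  · rintro ⟨⟨m, hm⟩, ⟨n, hn⟩⟩
    exact ⟨⟨n, -m⟩, by ext <;> simp [hm, hn]⟩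

def residue (z : ℤ√(-2)) : ZMod 8 × ZMod 4 := (z.re, z.im)

theorem mk_eq_mk_iff (z w : ℤ√(-2)) : mk₅ z = mk₅ w ↔ residue z = residue w := by
  rw [eq_comm, Ideal.Quotient.mk_eq_mk_iff_sub_mem, Ideal.mem_span_singleton,
    sqrtd_pow_five_dvd_iff]
  simp only [residue, Prod.mk.injEq, ZMod.intCast_eq_intCast_iff_dvd_sub, re_sub, im_sub,
    Nat.cast_ofNat]

theorem mk_pow_eq_one_iff (z : ℤ√(-2)) (n : ℕ) : mk₅ z ^ n = 1 ↔ residue (z ^ n) = residue 1 := by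
  rw [← map_pow, ← map_one mk₅, mk_eq_mk_iff]

theorem odd_re_of_isUnit_mk {z : ℤ√(-2)} (hz : IsUnit (mk₅ z)) : Odd z.re := by
  obtain ⟨w', hw⟩ := hz.exists_right_inv
  obtain ⟨w, rfl⟩ := Ideal.Quotient.mk_surjective w'
  rw [← map_mul, ← map_one mk₅, mk_eq_mk_iff] at hw
  have hre : ((z * w).re : ZMod 8) = 1 := by simpa [residue] using congrArg Prod.fst hw
  rw [← Int.not_even_iff_odd]
  rintro ⟨r, hr⟩
  have hre_even : (z * w).re = 2 * (r * w.re - z.im * w.im) := by rw [re_mul, hr]; ring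
  rw [hre_even, Int.cast_mul, Int.cast_ofNat] at hre
  exact (by decide : ∀ x : ZMod 8, 2 * x ≠ 1) _ hre

theorem orderOf_mk_one_add_sqrtd : orderOf (mk₅ (1 + η)) = 4 :=
  orderOf_eq_prime_pow (p := 2) (n := 1)
    (by rw [mk_pow_eq_one_iff]; decide) (by rw [mk_pow_eq_one_iff]; decide)

theorem orderOf_mk_neg_one : orderOf (mk₅ (-1)) = 2 :=
  orderOf_eq_prime_pow (p := 2) (n := 0)
    (by rw [mk_pow_eq_one_iff]; decide) (by rw [mk_pow_eq_one_iff]; decide)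

theorem orderOf_mk_five : orderOf (mk₅ 5) = 2 :=
  orderOf_eq_prime_pow (p := 2) (n := 0)
    (by rw [mk_pow_eq_one_iff]; decide) (by rw [mk_pow_eq_one_iff]; decide)

def unitWord (t : Fin 4 × Fin 2 × Fin 2) : ℤ√(-2) :=
  (1 + η) ^ (t.1 : ℕ) * (-1) ^ (t.2.1 : ℕ) * 5 ^ (t.2.2 : ℕ)

theorem residue_unitWord_injective : Function.Injective (residue ∘ unitWord) := by
  unfold Function.Injective; decide

theorem exists_residue_unitWord_eq :
    ∀ r : ZMod 8 × ZMod 4, r.1.val % 2 = 1 → ∃ t, residue (unitWord t) = r := by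
  decide

theorem existsUnique_mk_unitWord (u : R₅ˣ) : ∃! t, (u : R₅) = mk₅ (unitWord t) := by
  obtain ⟨z, hz⟩ := Ideal.Quotient.mk_surjective (u : R₅)
  have hodd : Odd z.re := odd_re_of_isUnit_mk (hz ▸ u.isUnit)
  have hval : ((z.re : ZMod 8).val : ℤ) = z.re % 8 := ZMod.val_intCast z.re
  obtain ⟨t, ht⟩ := exists_residue_unitWord_eq (residue z) (by
    rw [Int.odd_iff] at hodd; simp only [residue]; omega)
  refine ⟨t, hz ▸ (mk_eq_mk_iff _ _).2 ht.symm, fun s hs => residue_unitWord_injective ?_⟩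
  simp only [Function.comp_apply, ht, ← (mk_eq_mk_iff _ _).1 (hz.trans hs)]

theorem mk_unitWord (t : Fin 4 × Fin 2 × Fin 2) :
    mk₅ (unitWord t) = mk₅ (1 + η) ^ (t.1 : ℕ) * mk₅ (-1) ^ (t.2.1 : ℕ) * mk₅ 5 ^ (t.2.2 : ℕ) := by
  simp only [unitWord, map_mul, map_pow]

end Zsqrtd

/-- Let `R = ℤ[√-2]`, `η = √-2`, and consider `R ⧸ (η⁵)`. The unit group `(R ⧸ (η⁵))ˣ` has
order 16, it is the internal direct product of the cyclic subgroups generated by the classes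
of `1 + η`, `-1` and `5` (of orders 4, 2 and 2 respectively), and hence it is isomorphic to
`ℤ/4ℤ × ℤ/2ℤ × ℤ/2ℤ`. -/
theorem stmt_14 :
    Nat.card ((ℤ√(-2) ⧸ Ideal.span {(Zsqrtd.sqrtd : ℤ√(-2)) ^ 5})ˣ) = 16 ∧
    orderOf (Ideal.Quotient.mk (Ideal.span {(Zsqrtd.sqrtd : ℤ√(-2)) ^ 5})
      (1 + Zsqrtd.sqrtd)) = 4 ∧
    orderOf (Ideal.Quotient.mk (Ideal.span {(Zsqrtd.sqrtd : ℤ√(-2)) ^ 5})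
      (-1 : ℤ√(-2))) = 2 ∧
    orderOf (Ideal.Quotient.mk (Ideal.span {(Zsqrtd.sqrtd : ℤ√(-2)) ^ 5})
      (5 : ℤ√(-2))) = 2 ∧
    (∀ u : (ℤ√(-2) ⧸ Ideal.span {(Zsqrtd.sqrtd : ℤ√(-2)) ^ 5})ˣ,
      ∃! t : Fin 4 × Fin 2 × Fin 2,
        (u : ℤ√(-2) ⧸ Ideal.span {(Zsqrtd.sqrtd : ℤ√(-2)) ^ 5}) =
          Ideal.Quotient.mk (Ideal.span {(Zsqrtd.sqrtd : ℤ√(-2)) ^ 5})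
              (1 + Zsqrtd.sqrtd) ^ (t.1 : ℕ) *
            Ideal.Quotient.mk (Ideal.span {(Zsqrtd.sqrtd : ℤ√(-2)) ^ 5})
              (-1 : ℤ√(-2)) ^ (t.2.1 : ℕ) *
            Ideal.Quotient.mk (Ideal.span {(Zsqrtd.sqrtd : ℤ√(-2)) ^ 5})
              (5 : ℤ√(-2)) ^ (t.2.2 : ℕ)) ∧
    Nonempty ((ℤ√(-2) ⧸ Ideal.span {(Zsqrtd.sqrtd : ℤ√(-2)) ^ 5})ˣ ≃*
      Multiplicative (ZMod 4) × Multiplicative (ZMod 2) × Multiplicative (ZMod 2)) := by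
  have h₁ := Zsqrtd.orderOf_mk_one_add_sqrtd
  have h₂ := Zsqrtd.orderOf_mk_neg_one
  have h₃ := Zsqrtd.orderOf_mk_five
  have hrepr := fun u => by
    simpa only [Zsqrtd.mk_unitWord] using Zsqrtd.existsUnique_mk_unitWord u
  have hiso := Units.nonempty_mulEquiv_zmod_prod_of_existsUnique (h₁ ▸ pow_orderOf_eq_one _)
    (h₂ ▸ pow_orderOf_eq_one _) (h₃ ▸ pow_orderOf_eq_one _) hrepr
  refine ⟨?_, h₁, h₂, h₃, hrepr, hiso⟩
  rw [Nat.card_congr hiso.some.toEquiv]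
  simp
end

section
/- Let R = ℤ[√−2] and η = √−2. There exists a group homomorphism χ from the unit group (R/(η⁵))^× to {1, −1} such that: (i) for every odd integer a, χ(class of a) = 1 if a ≡ 1 or 3 (mod 8), and χ(class of a) = −1 if a ≡ 5 or 7 (mod 8); and (ii) χ(class of c − d√−2) = χ(class of c + d√−2) for every c + d√−2 ∈ ℤ[√−2] whose class in R/(η⁵) is a unit (i.e. χ is invariant under the conjugation automorphism c + d√−2 ↦ c − d√−2). -/
/-!
Since `η⁵ = 4√-2`, two elements of `ℤ[√-2]` are congruent modulo `η⁵` exactly when their real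
parts agree mod 8 and their imaginary parts mod 4, and every unit class has odd real part. On such
residues put `χ(c + d√-2) = ε(c) · (-1)^[d ≡ 2 mod 4]`, where `ε(c) = 1` for `c ≡ 1, 3` and `-1`
for `c ≡ 5, 7 (mod 8)`. Multiplicativity is then a finite check, and `χ` only sees `d` up to sign.
-/

open Zsqrtd

namespace Zsqrtd

theorem intCast_mul_sqrtd_dvd_iff {d : ℤ} (n : ℤ) (z : ℤ√d) :
    (n : ℤ√d) * sqrtd ∣ z ↔ n * d ∣ z.re ∧ n ∣ z.im := by
  constructor
  · rintro ⟨w, rfl⟩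
    exact ⟨⟨w.im, by simp [re_mul, mul_comm d n]⟩, ⟨w.re, by simp [im_mul]⟩⟩
  · rintro ⟨⟨y, hy⟩, ⟨x, hx⟩⟩
    exact ⟨⟨x, y⟩, by ext <;> simp [re_mul, im_mul, hx, hy, mul_comm d n]⟩

end Zsqrtd

local notation "𝔪" => Ideal.span {(Zsqrtd.sqrtd : ℤ√(-2)) ^ 5}

local notation "π₄" => ZMod.castHom (show 4 ∣ 8 by norm_num) (ZMod 4)

namespace SqrtNegTwo

theorem sqrtd_pow_five : (sqrtd : ℤ√(-2)) ^ 5 = ((4 : ℤ) : ℤ√(-2)) * sqrtd := by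
  ext <;> simp [pow_succ, re_mul, im_mul]

theorem mem_span_sqrtd_pow_five_iff (z : ℤ√(-2)) : z ∈ 𝔪 ↔ 8 ∣ z.re ∧ 4 ∣ z.im := by
  rw [Ideal.mem_span_singleton, sqrtd_pow_five, intCast_mul_sqrtd_dvd_iff]
  norm_num

theorem mk_eq_mk_iff (z w : ℤ√(-2)) :
    Ideal.Quotient.mk 𝔪 z = Ideal.Quotient.mk 𝔪 w ↔
      (z.re : ZMod 8) = w.re ∧ (z.im : ZMod 4) = w.im := by
  rw [Ideal.Quotient.eq, mem_span_sqrtd_pow_five_iff, ZMod.intCast_eq_intCast_iff_dvd_sub,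
    ZMod.intCast_eq_intCast_iff_dvd_sub, ← dvd_neg, ← dvd_neg (b := w.im - z.im)]
  simp

theorem odd_re_of_isUnit_mk {z : ℤ√(-2)} (hz : IsUnit (Ideal.Quotient.mk 𝔪 z)) : Odd z.re := by
  obtain ⟨w, hw⟩ := Ideal.Quotient.mk_surjective (hz.unit⁻¹ : (ℤ√(-2) ⧸ 𝔪)ˣ).val
  have hzw : Ideal.Quotient.mk 𝔪 (z * w) = Ideal.Quotient.mk 𝔪 1 := by
    rw [map_mul, hw, map_one, IsUnit.mul_val_inv]
  obtain ⟨h8, -⟩ := (mk_eq_mk_iff _ _).1 hzw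
  rw [ZMod.intCast_eq_intCast_iff_dvd_sub, re_one, re_mul] at h8
  obtain ⟨k, hk⟩ := h8
  have hprod : Odd (z.re * w.re) := ⟨z.im * w.im - 4 * k, by push_cast at hk; linarith⟩
  exact (Int.odd_mul.1 hprod).1

def residueChar (c : ZMod 8) (d : ZMod 4) : ℤˣ :=
  (if c = 1 ∨ c = 3 then 1 else -1) * (if d = 2 then -1 else 1)

theorem residueChar_mul : ∀ x y b d : ZMod 8,
    residueChar ((2 * x + 1) * (2 * y + 1) - 2 * (b * d))
        (π₄ ((2 * x + 1) * d + b * (2 * y + 1))) =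
      residueChar (2 * x + 1) (π₄ b) * residueChar (2 * y + 1) (π₄ d) := by
  set_option maxHeartbeats 4000000 in decide

theorem residueChar_neg (c : ZMod 8) (d : ZMod 4) : residueChar c (-d) = residueChar c d := by
  revert c d; decide

def elementChar (z : ℤ√(-2)) : ℤˣ := residueChar z.re z.im

theorem elementChar_mul {z w : ℤ√(-2)} (hz : Odd z.re) (hw : Odd w.re) :
    elementChar (z * w) = elementChar z * elementChar w := by
  obtain ⟨k, hk⟩ := hz
  obtain ⟨l, hl⟩ := hw
  convert residueChar_mul k l z.im w.im using 2 <;>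
    simp only [elementChar, map_intCast, re_mul, im_mul, hk, hl] <;>
    congr 1 <;> push_cast [map_add, map_mul, map_ofNat, map_one, map_intCast] <;> ring

theorem elementChar_star (z : ℤ√(-2)) : elementChar (star z) = elementChar z := by
  rw [elementChar, re_star, im_star, Int.cast_neg, residueChar_neg, elementChar]

theorem elementChar_intCast (a : ℤ) :
    elementChar a = if a % 8 = 1 ∨ a % 8 = 3 then 1 else -1 := by
  have hresidue : ∀ r : ℤ, 0 ≤ r → r < 8 →
      residueChar r 0 = if r = 1 ∨ r = 3 then 1 else -1 := by
    decide
  rw [elementChar, re_intCast, im_intCast, Int.cast_zero, ← ZMod.intCast_mod a 8]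
  exact hresidue _ (by omega) (by omega)

theorem elementChar_congr {z w : ℤ√(-2)}
    (h : Ideal.Quotient.mk 𝔪 z = Ideal.Quotient.mk 𝔪 w) : elementChar z = elementChar w := by
  obtain ⟨hre, him⟩ := (mk_eq_mk_iff z w).1 h
  rw [elementChar, elementChar, hre, him]

theorem elementChar_out {q : ℤ√(-2) ⧸ 𝔪} {z : ℤ√(-2)} (h : q = Ideal.Quotient.mk 𝔪 z) :
    elementChar q.out = elementChar z :=
  elementChar_congr (by rw [Ideal.Quotient.mk_out, h])

noncomputable def unitsChar : (ℤ√(-2) ⧸ 𝔪)ˣ →* ℤˣ :=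
  MonoidHom.mk' (fun u => elementChar (u : ℤ√(-2) ⧸ 𝔪).out) fun u v => by
    obtain ⟨z, hz⟩ := Ideal.Quotient.mk_surjective (u : ℤ√(-2) ⧸ 𝔪)
    obtain ⟨w, hw⟩ := Ideal.Quotient.mk_surjective (v : ℤ√(-2) ⧸ 𝔪)
    have hzw : Ideal.Quotient.mk 𝔪 (z * w) = (u * v : (ℤ√(-2) ⧸ 𝔪)ˣ) := by
      rw [map_mul, hz, hw, Units.val_mul]
    rw [elementChar_out hzw.symm, elementChar_out hz.symm, elementChar_out hw.symm,
      elementChar_mul (odd_re_of_isUnit_mk (hz ▸ u.isUnit))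
        (odd_re_of_isUnit_mk (hw ▸ v.isUnit))]

theorem unitsChar_apply {u : (ℤ√(-2) ⧸ 𝔪)ˣ} {z : ℤ√(-2)}
    (h : (u : ℤ√(-2) ⧸ 𝔪) = Ideal.Quotient.mk 𝔪 z) : unitsChar u = elementChar z :=
  elementChar_out h

end SqrtNegTwo

open SqrtNegTwo

/-- Let `R = ℤ[√-2]` and `η = √-2`. There is a group homomorphism `χ` from
`(R ⧸ (η⁵))ˣ` to `{1, -1} = ℤˣ` such that:
(i)  for every odd integer `a`, `χ` takes the value `1` on the class of `a` if
     `a ≡ 1, 3 (mod 8)` and the value `-1` if `a ≡ 5, 7 (mod 8)`;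
(ii) `χ` is invariant under the conjugation automorphism `c + d√-2 ↦ c - d√-2` (`star`). -/
theorem stmt_15 :
    ∃ χ : (ℤ√(-2) ⧸ Ideal.span {(Zsqrtd.sqrtd : ℤ√(-2)) ^ 5})ˣ →* ℤˣ,
      (∀ (u : (ℤ√(-2) ⧸ Ideal.span {(Zsqrtd.sqrtd : ℤ√(-2)) ^ 5})ˣ) (a : ℤ), Odd a →
        (u : ℤ√(-2) ⧸ Ideal.span {(Zsqrtd.sqrtd : ℤ√(-2)) ^ 5}) =
          Ideal.Quotient.mk (Ideal.span {(Zsqrtd.sqrtd : ℤ√(-2)) ^ 5}) (a : ℤ√(-2)) →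
        ((a % 8 = 1 ∨ a % 8 = 3) → χ u = 1) ∧ ((a % 8 = 5 ∨ a % 8 = 7) → χ u = -1)) ∧
      (∀ (u v : (ℤ√(-2) ⧸ Ideal.span {(Zsqrtd.sqrtd : ℤ√(-2)) ^ 5})ˣ) (z : ℤ√(-2)),
        (u : ℤ√(-2) ⧸ Ideal.span {(Zsqrtd.sqrtd : ℤ√(-2)) ^ 5}) =
          Ideal.Quotient.mk (Ideal.span {(Zsqrtd.sqrtd : ℤ√(-2)) ^ 5}) z →
        (v : ℤ√(-2) ⧸ Ideal.span {(Zsqrtd.sqrtd : ℤ√(-2)) ^ 5}) =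
          Ideal.Quotient.mk (Ideal.span {(Zsqrtd.sqrtd : ℤ√(-2)) ^ 5}) (star z) →
        χ v = χ u) := by
  refine ⟨unitsChar, fun u a _ hu => ?_, fun u v z hu hv => ?_⟩
  · rw [unitsChar_apply hu, elementChar_intCast]
    exact ⟨fun h => if_pos h, fun h => if_neg (by omega)⟩
  · rw [unitsChar_apply hu, unitsChar_apply hv, elementChar_star]
end

section
/- Let R = ℤ[i] be the Gaussian integers and η = 1 − i. There exists a group homomorphism χ from the unit group (R/(η³))^× to the multiplicative group ℂ^× such that: (i) χ(class of i) = i; (ii) for every odd integer a, χ(class of a) = 1 if a ≡ 1 (mod 4) and χ(class of a) = −1 if a ≡ 3 (mod 4); and (iii) χ(class of c − di) is the complex conjugate of χ(class of c + di) for every c + di ∈ ℤ[i] whose class in R/(η³) is a unit. -/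
open scoped ComplexConjugate

/-!
The unit group of `ℤ[i]/(η³)` is cyclic of order 4, generated by the class of `i`: a unit is the
class of some `z` with `z.re + z.im` odd, and every such `z` is congruent to one of `±1, ±i`
modulo `η³ = -2 - 2i`. So there is a character `χ` with `χ(i) = I`. An odd integer `a` is
congruent to `1` or `-1 = i²` according to `a mod 4`. Conjugation induces a ring automorphism of
the quotient sending `i` to `-i = i⁻¹`, hence it inverts every unit, and `χ(u⁻¹) = conj (χ u)`
because `χ u` is a fourth root of unity.
-/

namespace GaussianInt.EtaCube

open Zsqrtd

local notation "η" => (1 - sqrtd : GaussianInt)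

local notation "Q" => GaussianInt ⧸ Ideal.span {η ^ 3}

local notation "π" => Ideal.Quotient.mk (Ideal.span {η ^ 3})

lemma eta_pow_three : η ^ 3 = ⟨-2, -2⟩ := by
  ext <;> simp [pow_succ]

lemma eta_pow_three_dvd_iff (z : GaussianInt) :
    η ^ 3 ∣ z ↔ 4 ∣ z.re + z.im ∧ 4 ∣ z.re - z.im := by
  rw [eta_pow_three]
  constructor
  · rintro ⟨w, rfl⟩
    simp only [re_mul, im_mul]
    omega
  · rintro ⟨⟨p, hp⟩, ⟨q, hq⟩⟩
    exact ⟨⟨-p, q⟩, by ext <;> simp <;> omega⟩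

lemma mk_eq_mk_iff (z w : GaussianInt) :
    π z = π w ↔ 4 ∣ z.re - w.re + (z.im - w.im) ∧ 4 ∣ z.re - w.re - (z.im - w.im) := by
  rw [Ideal.Quotient.mk_eq_mk_iff_sub_mem, Ideal.mem_span_singleton, eta_pow_three_dvd_iff,
    re_sub, im_sub]

lemma odd_re_add_im_of_isUnit {z : GaussianInt} (hz : IsUnit (π z)) : Odd (z.re + z.im) := by
  obtain ⟨w, hw⟩ := hz.exists_right_inv
  obtain ⟨w, rfl⟩ := Ideal.Quotient.mk_surjective w
  rw [← map_mul, ← map_one π, mk_eq_mk_iff] at hw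
  by_contra heven
  obtain ⟨p, hp⟩ := Int.not_odd_iff_even.mp heven
  have hsum : (z * w).re + (z * w).im = 2 * (p * (w.re + w.im) - z.im * w.im) := by
    simp only [re_mul, im_mul]
    linear_combination (w.re + w.im) * hp
  simp only [re_one, im_one] at hw
  omega

lemma sqrtd_sq : (sqrtd ^ 2 : GaussianInt) = -1 := by
  ext <;> simp [sq]

noncomputable def unitI : Qˣ where
  val := π sqrtd
  inv := π (-sqrtd)
  val_inv := by rw [← map_mul, mul_neg, ← sq, sqrtd_sq, neg_neg, map_one]
  inv_val := by rw [← map_mul, neg_mul, ← sq, sqrtd_sq, neg_neg, map_one]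

lemma unitI_sq : unitI ^ 2 = -1 := by
  ext
  rw [Units.val_pow_eq_pow_val, Units.val_neg, Units.val_one, unitI, ← map_pow, sqrtd_sq, map_neg,
    map_one]

lemma mem_zpowers_unitI (u : Qˣ) : u ∈ Subgroup.zpowers unitI := by
  obtain ⟨z, hz⟩ := Ideal.Quotient.mk_surjective (u : Q)
  obtain ⟨p, hp⟩ := odd_re_add_im_of_isUnit (hz ▸ u.isUnit)
  have key : π z = π 1 ∨ π z = π sqrtd ∨ π z = π (-1) ∨ π z = π (-sqrtd) := by
    simp only [mk_eq_mk_iff, re_one, im_one, re_sqrtd, im_sqrtd, re_neg, im_neg]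
    omega
  rcases key with h | h | h | h
  · have : u = 1 := Units.ext (by rw [← hz, h, map_one, Units.val_one])
    exact this ▸ Subgroup.one_mem _
  · have : u = unitI := Units.ext (by rw [← hz, h]; rfl)
    exact this ▸ Subgroup.mem_zpowers _
  · have : u = unitI ^ 2 := Units.ext (by rw [← hz, h, unitI_sq, map_neg, map_one]; rfl)
    exact this ▸ Subgroup.pow_mem _ (Subgroup.mem_zpowers _) 2
  · have : u = unitI⁻¹ := Units.ext (by rw [← hz, h]; rfl)
    exact this ▸ Subgroup.inv_mem _ (Subgroup.mem_zpowers _)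

lemma neg_one_ne_one : (-1 : Qˣ) ≠ 1 := by
  intro h
  have := congrArg Units.val h
  rw [Units.val_neg, Units.val_one, ← map_one π, ← map_neg, mk_eq_mk_iff] at this
  simp at this

lemma orderOf_unitI : orderOf unitI = 4 :=
  orderOf_eq_prime_pow (p := 2) (n := 1) (by rw [pow_one, unitI_sq]; exact neg_one_ne_one)
    (by rw [show 2 ^ (1 + 1) = 2 * 2 by rfl, pow_mul, unitI_sq, neg_one_sq])

lemma pow_four_eq_one (u : Qˣ) : u ^ 4 = 1 :=
  orderOf_dvd_iff_pow_eq_one.mp (orderOf_unitI ▸ orderOf_dvd_of_mem_zpowers (mem_zpowers_unitI u))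

lemma mk_intCast_eq_mk_intCast_iff (a b : ℤ) : π (a : GaussianInt) = π b ↔ a ≡ b [ZMOD 4] := by
  simp only [mk_eq_mk_iff, re_intCast, im_intCast, Int.ModEq]
  omega

lemma span_eta_pow_three_le_comap_star :
    Ideal.span {η ^ 3} ≤ (Ideal.span {η ^ 3}).comap (starRingEnd GaussianInt) := by
  rw [Ideal.span_singleton_le_iff_mem, Ideal.mem_comap, Ideal.mem_span_singleton,
    eta_pow_three_dvd_iff, starRingEnd_apply, eta_pow_three, star_mk]
  decide

noncomputable def conjQ : Q →+* Q :=
  Ideal.quotientMap _ (starRingEnd GaussianInt) span_eta_pow_three_le_comap_star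

lemma conjQ_mk (z : GaussianInt) : conjQ (π z) = π (star z) :=
  Ideal.quotientMap_mk

lemma units_map_conjQ_unitI : Units.map conjQ unitI = unitI⁻¹ :=
  Units.ext (conjQ_mk sqrtd)

lemma units_map_conjQ (u : Qˣ) : Units.map conjQ u = u⁻¹ := by
  obtain ⟨k, rfl⟩ := Subgroup.mem_zpowers_iff.mp (mem_zpowers_unitI u)
  rw [map_zpow, units_map_conjQ_unitI, inv_zpow]

noncomputable def chi : Qˣ →* ℂˣ :=
  monoidHomOfForallMemZpowers mem_zpowers_unitI (g' := Units.mk0 Complex.I Complex.I_ne_zero)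
    (orderOf_unitI ▸ orderOf_dvd_of_pow_eq_one (Units.ext (by simp)))

lemma chi_unitI : (chi unitI : ℂ) = Complex.I := by
  rw [chi, monoidHomOfForallMemZpowers_apply_gen, Units.val_mk0]

lemma chi_neg_one : chi (-1) = -1 := by
  ext
  rw [← unitI_sq, map_pow, Units.val_pow_eq_pow_val, chi_unitI, Complex.I_sq, Units.val_neg,
    Units.val_one]

lemma chi_inv (u : Qˣ) : (chi u⁻¹ : ℂ) = conj (chi u : ℂ) := by
  rw [map_inv, Units.val_inv_eq_inv_val, Complex.inv_eq_conj]
  refine Complex.norm_eq_one_of_pow_eq_one (n := 4) ?_ (by norm_num)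
  rw [← Units.val_pow_eq_pow_val, ← map_pow, pow_four_eq_one, map_one, Units.val_one]

end GaussianInt.EtaCube

/-- Let `R = ℤ[i]` be the Gaussian integers and `η = 1 - i`. There is a group homomorphism
`χ` from `(R ⧸ (η³))ˣ` to `ℂˣ` such that:
(i)   the value of `χ` on the class of `i` is `i`;
(ii)  for every odd integer `a`, `χ` takes the value `1` on the class of `a` if
      `a ≡ 1 (mod 4)` and the value `-1` if `a ≡ 3 (mod 4)`;
(iii) `χ` intertwines complex conjugation on `ℤ[i]` (`star`) with complex conjugation
      on `ℂ`. -/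
theorem stmt_16 :
    ∃ χ : (GaussianInt ⧸ Ideal.span {(1 - Zsqrtd.sqrtd : GaussianInt) ^ 3})ˣ →* ℂˣ,
      (∀ u : (GaussianInt ⧸ Ideal.span {(1 - Zsqrtd.sqrtd : GaussianInt) ^ 3})ˣ,
        (u : GaussianInt ⧸ Ideal.span {(1 - Zsqrtd.sqrtd : GaussianInt) ^ 3}) =
          Ideal.Quotient.mk (Ideal.span {(1 - Zsqrtd.sqrtd : GaussianInt) ^ 3})
            (Zsqrtd.sqrtd : GaussianInt) →
        (χ u : ℂ) = Complex.I) ∧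
      (∀ (u : (GaussianInt ⧸ Ideal.span {(1 - Zsqrtd.sqrtd : GaussianInt) ^ 3})ˣ) (a : ℤ),
        Odd a →
        (u : GaussianInt ⧸ Ideal.span {(1 - Zsqrtd.sqrtd : GaussianInt) ^ 3}) =
          Ideal.Quotient.mk (Ideal.span {(1 - Zsqrtd.sqrtd : GaussianInt) ^ 3})
            (a : GaussianInt) →
        (a % 4 = 1 → χ u = 1) ∧ (a % 4 = 3 → χ u = -1)) ∧
      (∀ (u v : (GaussianInt ⧸ Ideal.span {(1 - Zsqrtd.sqrtd : GaussianInt) ^ 3})ˣ)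
          (z : GaussianInt),
        (u : GaussianInt ⧸ Ideal.span {(1 - Zsqrtd.sqrtd : GaussianInt) ^ 3}) =
          Ideal.Quotient.mk (Ideal.span {(1 - Zsqrtd.sqrtd : GaussianInt) ^ 3}) z →
        (v : GaussianInt ⧸ Ideal.span {(1 - Zsqrtd.sqrtd : GaussianInt) ^ 3}) =
          Ideal.Quotient.mk (Ideal.span {(1 - Zsqrtd.sqrtd : GaussianInt) ^ 3}) (star z) →
        (χ v : ℂ) = conj (χ u : ℂ)) := by
  open GaussianInt.EtaCube in
  refine ⟨chi, fun u hu ↦ ?_, fun u a _ hu ↦ ⟨fun ha ↦ ?_, fun ha ↦ ?_⟩, fun u v z hu hv ↦ ?_⟩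
  · rw [show u = unitI from Units.ext hu, chi_unitI]
  · have h1 := (mk_intCast_eq_mk_intCast_iff a 1).mpr (by unfold Int.ModEq; omega)
    rw [show u = 1 from Units.ext (by simpa [hu] using h1), map_one]
  · have h3 := (mk_intCast_eq_mk_intCast_iff a (-1)).mpr (by unfold Int.ModEq; omega)
    rw [show u = -1 from Units.ext (by simpa [hu] using h3), chi_neg_one]
  · have : v = u⁻¹ := Units.ext <| by
      rw [hv, ← conjQ_mk, ← hu, ← units_map_conjQ, Units.coe_map, MonoidHom.coe_coe]
    rw [this, chi_inv]
end

section
/- Let M be a field extension of ℚ₃ of degree 6 that is Galois over ℚ₃ with cyclic Galois group, and suppose M contains an element ω with ω² + ω + 1 = 0 (a primitive cube root of unity). Let L = ℚ₃(ω) ⊆ M. Then there exist a unit α of the ring of integers of L and an element x ∈ M such that x³ = α and M = L(x). -/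
/-!
`L = ℚ₃(ω)` is quadratic over `ℚ₃` and `M/L` is cyclic of degree 3, so by Kummer theory
`M = L(x)` with `x³ ∈ L`. A generator `σ` of `Gal(M/ℚ₃)` squares `ω`, hence every cube root
of unity; since `σ²x / x` is a cube root of unity, `t = x · σx` is fixed by `σ²`. Then
`c = x³ · σ(x³)` and `t · σt` lie in `ℚ₃` with `c² = (t · σt)³`, so `3 ∣ v₃(c)`, say
`v₃(c) = 3k`. For `π = ω - ω²` we have `π · σπ = 3`, so `α = (x / πᵏ)³` satisfies
`α · σα = c / 3^v₃(c)`, a unit of `ℤ₃`. The spectral norm on `M` is multiplicative and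
`σ`-invariant, so `α` has spectral norm `1`: `α` and `α⁻¹` are integral over `ℤ₃`.
-/

open Polynomial IntermediateField Module

namespace Padic

variable {p : ℕ} [Fact p.Prime]

theorem three_dvd_valuation_of_sq_eq_pow_three {c s : ℚ_[p]} (h : c ^ 2 = s ^ 3) :
    3 ∣ c.valuation := by
  have := congrArg valuation h
  rw [valuation_pow, valuation_pow] at this
  push_cast at this
  omega

theorem norm_div_zpow_valuation {c : ℚ_[p]} (hc : c ≠ 0) :
    ‖c / (p : ℚ_[p]) ^ c.valuation‖ = 1 := by
  rw [norm_div, norm_p_zpow, norm_eq_zpow_neg_valuation hc,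
    div_self (zpow_ne_zero _ (Nat.cast_ne_zero.mpr (Fact.out : p.Prime).ne_zero))]

theorem sq_add_self_add_one_ne_zero (r : ℚ_[3]) : r ^ 2 + r + 1 ≠ 0 := by
  intro h
  have h4 : (2 * r + 1) ^ 4 = (3 : ℚ_[3]) ^ 2 := by
    linear_combination 4 * ((2 * r + 1) ^ 2 - 3) * h
  have := congrArg valuation h4
  rw [valuation_pow, valuation_pow, valuation_ofNat] at this
  norm_num at this
  omega

end Padic

namespace PadicInt

variable {p : ℕ} [Fact p.Prime] {L : Type*} [Field L] [Algebra ℚ_[p] L] [Algebra ℤ_[p] L]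
  [IsScalarTower ℤ_[p] ℚ_[p] L]

theorem isIntegral_of_spectralNorm_le_one {x : L} (hx : IsIntegral ℚ_[p] x)
    (h : spectralNorm ℚ_[p] L x ≤ 1) : IsIntegral ℤ_[p] x := by
  have hcoeff := (spectralValue_le_one_iff (minpoly.monic hx)).mp h
  have hlifts : minpoly ℚ_[p] x ∈ lifts (algebraMap ℤ_[p] ℚ_[p]) :=
    (lifts_iff_coeff_lifts _).mpr fun n ↦ ⟨⟨_, hcoeff n⟩, rfl⟩
  obtain ⟨q, hq, -, hmonic⟩ := lifts_and_natDegree_eq_and_monic hlifts (minpoly.monic hx)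
  refine ⟨q, hmonic, ?_⟩
  rw [← aeval_def, ← aeval_map_algebraMap ℚ_[p], hq, minpoly.aeval]

theorem isIntegral_of_mul_map_eq_algebraMap [Algebra.IsAlgebraic ℚ_[p] L] (σ : Gal(L/ℚ_[p]))
    {α : L} {c : ℚ_[p]} (hα : α * σ α = algebraMap ℚ_[p] L c) (hc : ‖c‖ = 1) :
    IsIntegral ℤ_[p] α := by
  refine isIntegral_of_spectralNorm_le_one (Algebra.IsIntegral.isIntegral α) ?_
  have hsq : spectralNorm ℚ_[p] L α ^ 2 = 1 := calc
    _ = spectralNorm ℚ_[p] L α * spectralNorm ℚ_[p] L (σ α) := by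
      rw [sq, ← spectralNorm_eq_of_equiv]
    _ = spectralNorm ℚ_[p] L (α * σ α) := (map_mul (spectralMulAlgNorm ℚ_[p] L) _ _).symm
    _ = 1 := by rw [hα, spectralNorm_extends, hc]
  exact ((pow_eq_one_iff_of_nonneg (spectralNorm_nonneg α) two_ne_zero).mp hsq).le

end PadicInt

theorem IsPrimitiveRoot.map_eq_pow_of_pow_eq_one {R G : Type*} [CommRing R] [IsDomain R]
    [FunLike G R R] [MonoidHomClass G R R] {ζ u : R} {n m : ℕ} [NeZero n]
    (hζ : IsPrimitiveRoot ζ n) {σ : G} (hσ : σ ζ = ζ ^ m) (hu : u ^ n = 1) : σ u = u ^ m := by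
  obtain ⟨i, -, rfl⟩ := hζ.eq_pow_of_pow_eq_one hu
  rw [map_pow, hσ, ← pow_mul, ← pow_mul, mul_comm]

theorem isPrimitiveRoot_three_of_sq_add_self_add_one_eq_zero {K : Type*} [Field K]
    [NeZero (3 : K)] {ω : K} (hω : ω ^ 2 + ω + 1 = 0) : IsPrimitiveRoot ω 3 := by
  rw [← isRoot_cyclotomic_iff (n := 3), cyclotomic_three]
  simpa using hω

theorem sub_sq_mul_map_sub_sq {R G : Type*} [CommRing R] [FunLike G R R] [RingHomClass G R R]
    {ω : R} (hω : ω ^ 2 + ω + 1 = 0) {σ : G} (hσω : σ ω = ω ^ 2) :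
    (ω - ω ^ 2) * σ (ω - ω ^ 2) = 3 := by
  rw [map_sub, map_pow, hσω]
  linear_combination (ω ^ 4 - 2 * ω ^ 3 + 3 * ω - 3) * hω

theorem div_zpow_pow_three_mul_map {K G : Type*} [Field K] [FunLike G K K] [RingHomClass G K K]
    (σ : G) (x π : K) (k : ℤ) :
    (x / π ^ k) ^ 3 * σ ((x / π ^ k) ^ 3) = x ^ 3 * σ (x ^ 3) / (π * σ π) ^ (3 * k) := by
  rw [map_pow, map_pow, map_div₀, map_zpow₀, mul_comm 3 k, zpow_mul, mul_zpow, zpow_ofNat]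
  ring

section Galois

variable {F E : Type*} [Field F] [Field E] [Algebra F E]

theorem IntermediateField.mem_fixedField_zpowers_iff {σ : Gal(E/F)} {x : E} :
    x ∈ fixedField (Subgroup.zpowers σ) ↔ σ x = x := by
  refine ⟨fun h ↦ (mem_fixedField_iff _ x).mp h σ (Subgroup.mem_zpowers σ), fun h ↦ ?_⟩
  have hstab : Subgroup.zpowers σ ≤ MulAction.stabilizer Gal(E/F) x :=
    Subgroup.zpowers_le.mpr h
  exact (mem_fixedField_iff _ x).mpr fun g hg ↦ hstab hg

theorem mem_range_algebraMap_of_generator_apply_eq [FiniteDimensional F E] [IsGalois F E]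
    {σ : Gal(E/F)} (hσ : ∀ g, g ∈ Subgroup.zpowers σ) {x : E} (hx : σ x = x) :
    x ∈ Set.range (algebraMap F E) :=
  (IsGalois.mem_range_algebraMap_iff_fixed x).mpr fun g ↦
    (mem_fixedField_iff _ x).mp (mem_fixedField_zpowers_iff.mpr hx) g (hσ g)

theorem finrank_adjoin_eq_two_of_sq_add_self_add_one_eq_zero (hF : ∀ r : F, r ^ 2 + r + 1 ≠ 0)
    {ω : E} (hω : ω ^ 2 + ω + 1 = 0) : finrank F F⟮ω⟯ = 2 := by
  have hdeg : (X ^ 2 + X + 1 : F[X]).natDegree = 2 := by compute_degree!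
  have hmonic : (X ^ 2 + X + 1 : F[X]).Monic := by monicity!
  have hirr : Irreducible (X ^ 2 + X + 1 : F[X]) :=
    irreducible_of_degree_le_three_of_not_isRoot (by simp [hdeg]) fun r ↦ by simpa using hF r
  have hmin := minpoly.eq_of_irreducible_of_monic hirr (x := ω) (by simpa using hω) hmonic
  have hint : IsIntegral F ω := ⟨_, hmonic, by simpa [aeval_def] using hω⟩
  rw [adjoin.finrank hint, ← hmin, hdeg]

theorem apply_eq_sq_of_generator [FiniteDimensional F E] [IsGalois F E]
    {σ : Gal(E/F)} (hσ : ∀ g, g ∈ Subgroup.zpowers σ) {ω : E} (hω : ω ^ 2 + ω + 1 = 0)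
    (hωF : ω ∉ Set.range (algebraMap F E)) : σ ω = ω ^ 2 := by
  have hσω : σ ω ^ 2 + σ ω + 1 = 0 := by simpa using congrArg σ hω
  have hne : σ ω - ω ≠ 0 := sub_ne_zero.mpr fun h ↦
    hωF (mem_range_algebraMap_of_generator_apply_eq hσ h)
  have : (σ ω - ω) * (σ ω + ω + 1) = 0 := by linear_combination hσω - hω
  linear_combination (mul_eq_zero.mp this).resolve_left hne - hω

theorem exists_pow_mem_adjoin_eq_top [FiniteDimensional F E] [IsGalois F E] [IsCyclic Gal(E/F)]
    {ζ : E} {n : ℕ} (hζ : IsPrimitiveRoot ζ n) (hn : finrank F⟮ζ⟯ E = n) (hn1 : n ≠ 1) :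
    ∃ x : E, x ≠ 0 ∧ x ^ n ∈ F⟮ζ⟯ ∧ F⟮ζ, x⟯ = ⊤ := by
  have : IsCyclic Gal(E/F⟮ζ⟯) :=
    isCyclic_of_surjective (fixingSubgroupEquiv F⟮ζ⟯) (fixingSubgroupEquiv F⟮ζ⟯).surjective
  have hroot : (primitiveRoots (finrank F⟮ζ⟯ E) F⟮ζ⟯).Nonempty := by
    refine ⟨AdjoinSimple.gen F ζ, (mem_primitiveRoots finrank_pos).mpr ?_⟩
    rw [hn]
    exact hζ.of_map_of_injective (f := algebraMap F⟮ζ⟯ E) (algebraMap F⟮ζ⟯ E).injective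
  obtain ⟨x, ⟨a, ha⟩, hx⟩ := exists_root_adjoin_eq_top_of_isCyclic F⟮ζ⟯ E hroot
  refine ⟨x, ?_, hn ▸ ha ▸ a.2, ?_⟩
  · rintro rfl
    rw [adjoin_zero] at hx
    exact hn1 (by rw [← hn, ← finrank_top', ← hx, IntermediateField.finrank_bot])
  · rw [← Set.singleton_union, ← adjoin_adjoin_left, hx, restrictScalars_top]

theorem adjoin_pair_div_eq {ω x y : E} (hy : y ∈ F⟮ω⟯) (hy0 : y ≠ 0) :
    F⟮ω, x / y⟯ = F⟮ω, x⟯ := by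
  have hle : ∀ z, F⟮ω⟯ ≤ F⟮ω, z⟯ := fun z ↦ adjoin.mono _ _ _ (by simp)
  have hmem : ∀ z, z ∈ F⟮ω, z⟯ := fun z ↦ subset_adjoin _ _ (by simp)
  apply le_antisymm <;> rw [adjoin_le_iff, Set.insert_subset_iff, Set.singleton_subset_iff]
  · exact ⟨hle x (mem_adjoin_simple_self F ω), div_mem (hmem x) (hle x hy)⟩
  · refine ⟨hle _ (mem_adjoin_simple_self F ω), ?_⟩
    simpa [hy0] using mul_mem (hmem (x / y)) (hle _ hy)

theorem exists_sq_eq_pow_three_of_generator [FiniteDimensional F E] [IsGalois F E]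
    {σ : Gal(E/F)} (hσ : ∀ g, g ∈ Subgroup.zpowers σ) {ω : E} (hω : IsPrimitiveRoot ω 3)
    (hσω : σ ω = ω ^ 2) {x : E} (hx0 : x ≠ 0) (hx : x ^ 3 ∈ F⟮ω⟯) :
    ∃ c s : F, algebraMap F E c = x ^ 3 * σ (x ^ 3) ∧ c ^ 2 = s ^ 3 := by
  have hσσ : ∀ z ∈ F⟮ω⟯, σ (σ z) = z := by
    have hω4 : σ (σ ω) = ω := by
      rw [hσω, map_pow, hσω, ← pow_mul]
      linear_combination ω * hω.pow_eq_one
    intro z hz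
    have hle : F⟮ω⟯ ≤ fixedField (Subgroup.zpowers (σ * σ)) :=
      adjoin_simple_le_iff.mpr (mem_fixedField_zpowers_iff.mpr hω4)
    exact mem_fixedField_zpowers_iff.mp (hle hz)
  set u := σ (σ x) / x
  have hux : σ (σ x) = u * x := (div_mul_cancel₀ _ hx0).symm
  have hu3 : u ^ 3 = 1 := by
    rw [div_pow, ← map_pow, ← map_pow, hσσ _ hx, div_self (pow_ne_zero 3 hx0)]
  have hσu : σ u = u ^ 2 := hω.map_eq_pow_of_pow_eq_one hσω hu3
  set t := x * σ x
  have ht : σ (σ t) = t := by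
    simp only [t, map_mul, hux, hσu]
    linear_combination (x * σ x) * hu3
  have hfix : ∀ z, σ (σ z) = z → σ (z * σ z) = z * σ z := fun z hz ↦ by
    rw [map_mul, hz, mul_comm]
  obtain ⟨c, hc⟩ := mem_range_algebraMap_of_generator_apply_eq hσ (hfix _ (hσσ _ hx))
  obtain ⟨s, hs⟩ := mem_range_algebraMap_of_generator_apply_eq hσ (hfix t ht)
  refine ⟨c, s, hc, (algebraMap F E).injective ?_⟩
  rw [map_pow, map_pow, hc, hs]
  calc (x ^ 3 * σ (x ^ 3)) ^ 2 = x ^ 3 * σ (x ^ 3) * σ (x ^ 3 * σ (x ^ 3)) := by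
        rw [map_mul, hσσ _ hx]; ring
    _ = (t * σ t) ^ 3 := by simp only [t, map_mul, map_pow]; ring

end Galois

namespace Padic

variable {M : Type*} [Field M] [Algebra ℚ_[3] M]

theorem isPrimitiveRoot_three {ω : M} (hω : ω ^ 2 + ω + 1 = 0) : IsPrimitiveRoot ω 3 :=
  have : CharZero M := charZero_of_injective_algebraMap (algebraMap ℚ_[3] M).injective
  isPrimitiveRoot_three_of_sq_add_self_add_one_eq_zero hω

theorem exists_cube_mem_adjoin_eq_top [FiniteDimensional ℚ_[3] M] [IsGalois ℚ_[3] M]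
    [IsCyclic Gal(M/ℚ_[3])] (hdeg : finrank ℚ_[3] M = 6) {ω : M} (hω : ω ^ 2 + ω + 1 = 0) :
    ∃ x : M, x ≠ 0 ∧ x ^ 3 ∈ ℚ_[3]⟮ω⟯ ∧ ℚ_[3]⟮ω, x⟯ = ⊤ := by
  have hL : finrank ℚ_[3] ℚ_[3]⟮ω⟯ = 2 :=
    finrank_adjoin_eq_two_of_sq_add_self_add_one_eq_zero sq_add_self_add_one_ne_zero hω
  have hML : finrank ℚ_[3]⟮ω⟯ M = 3 := by
    have := finrank_mul_finrank ℚ_[3] ℚ_[3]⟮ω⟯ M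
    rw [hL, hdeg] at this
    omega
  exact exists_pow_mem_adjoin_eq_top (isPrimitiveRoot_three hω) hML (by norm_num)

end Padic

/-- Let `M` be a degree-6 cyclic Galois extension of `ℚ₃` containing a primitive cube
root of unity `ω`, and let `L = ℚ₃(ω)`. Then there are a unit `α` of the ring of integers
of `L` (i.e. `α ∈ L` with both `α` and `α⁻¹` integral over `ℤ₃`) and an element `x ∈ M`
with `x³ = α` and `M = L(x)`. -/
theorem stmt_17 (M : Type*) [Field M] [Algebra ℚ_[3] M]
    (hdeg : Module.finrank ℚ_[3] M = 6) [IsGalois ℚ_[3] M]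
    (hcyc : IsCyclic (M ≃ₐ[ℚ_[3]] M))
    [Algebra ℤ_[3] M] [IsScalarTower ℤ_[3] ℚ_[3] M]
    (ω : M) (hω : ω ^ 2 + ω + 1 = 0) :
    ∃ α x : M, α ∈ IntermediateField.adjoin ℚ_[3] {ω} ∧
      IsIntegral ℤ_[3] α ∧ α ≠ 0 ∧ IsIntegral ℤ_[3] α⁻¹ ∧
      x ^ 3 = α ∧ IntermediateField.adjoin ℚ_[3] {ω, x} = ⊤ := by
  have : FiniteDimensional ℚ_[3] M := .of_finrank_pos (by omega)
  have : IsCyclic Gal(M/ℚ_[3]) := hcyc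
  have : CharZero M := charZero_of_injective_algebraMap (algebraMap ℚ_[3] M).injective
  obtain ⟨x, hx0, hxL, hxtop⟩ := Padic.exists_cube_mem_adjoin_eq_top hdeg hω
  obtain ⟨σ, hσ⟩ := hcyc.exists_generator
  have hωQ : ω ∉ Set.range (algebraMap ℚ_[3] M) := fun ⟨r, hr⟩ ↦
    Padic.sq_add_self_add_one_ne_zero r ((algebraMap ℚ_[3] M).injective (by simpa [hr] using hω))
  have hσω := apply_eq_sq_of_generator hσ hω hωQ
  obtain ⟨c, s, hc, hcs⟩ := exists_sq_eq_pow_three_of_generator hσ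
    (Padic.isPrimitiveRoot_three hω) hσω hx0 hxL
  obtain ⟨k, hk⟩ := Padic.three_dvd_valuation_of_sq_eq_pow_three hcs
  set π := ω - ω ^ 2
  have hπ : π * σ π = 3 := sub_sq_mul_map_sub_sq hω hσω
  have hπ0 : π ^ k ≠ 0 := zpow_ne_zero k (left_ne_zero_of_mul (hπ ▸ three_ne_zero))
  have hπL : π ^ k ∈ ℚ_[3]⟮ω⟯ :=
    zpow_mem (sub_mem (mem_adjoin_simple_self _ ω) (pow_mem (mem_adjoin_simple_self _ ω) 2)) k
  have hc0 : c ≠ 0 := by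
    rintro rfl
    simp [hx0] at hc
  have hα : (x / π ^ k) ^ 3 * σ ((x / π ^ k) ^ 3) = algebraMap ℚ_[3] M (c / 3 ^ c.valuation) := by
    rw [div_zpow_pow_three_mul_map, hπ, ← hc, hk, map_div₀, map_zpow₀, map_ofNat]
  have hunit : ‖c / 3 ^ c.valuation‖ = 1 := by exact_mod_cast Padic.norm_div_zpow_valuation hc0
  refine ⟨_, x / π ^ k, ?_, PadicInt.isIntegral_of_mul_map_eq_algebraMap σ hα hunit,
    pow_ne_zero 3 (div_ne_zero hx0 hπ0), PadicInt.isIntegral_of_mul_map_eq_algebraMap σ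
      (by rw [map_inv₀, ← mul_inv, hα, ← map_inv₀]) (by rw [norm_inv, hunit, inv_one]), rfl,
    (adjoin_pair_div_eq hπL hπ0).trans hxtop⟩
  rw [div_pow]
  exact div_mem hxL (pow_mem hπL 3)
end

section
/- Let M be a field extension of ℚ₃ of degree 6 that is Galois over ℚ₃ with cyclic Galois group, and suppose M contains an element ω with ω² + ω + 1 = 0 (a primitive cube root of unity). Let 𝒪_M be the ring of integers of M and let χ: 𝒪_M^× → M^× be a group homomorphism such that χ(u)⁶ = 1 for all u ∈ 𝒪_M^×, and χ(τ(u)) = τ(χ(u)) for every τ ∈ Gal(M/ℚ₃) and every u ∈ 𝒪_M^×. Then χ(ω) = 1. -/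
/-!
Let `σ` generate `Gal(M/ℚ₃)`. As `-3` is not a square in `ℚ₃`, `ω ∉ ℚ₃`, so `σ ω = ω²` and the
automorphism `ρ = σ²` of order three fixes `ω`. By Hilbert's Theorem 90 (in its Lagrange-resolvent
form) `ω = y / ρ y` for some `y ≠ 0`, and then `u = σ y / y` satisfies `u = ω · ρ u`. Since `σ`
preserves the spectral norm, which is multiplicative, `u` has spectral norm one and is therefore a
unit of `𝒪_M`. Applying `χ` gives `χ u = χ ω · ρ (χ u)`, and `ρ` fixes every sixth root of unity
`±ωᵏ`, so `χ ω = 1`.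
-/

open Finset Polynomial

theorem Padic.three_sq_add_add_one_ne_zero (r : ℚ_[3]) : r ^ 2 + r + 1 ≠ 0 := by
  intro hr
  have hsq : ((2 * r + 1) ^ 2) ^ 2 = (3 : ℚ_[3]) ^ 2 := by
    linear_combination (4 * r ^ 2 + 4 * r - 2) * 4 * hr
  have hv := congrArg Padic.valuation hsq
  rw [Padic.valuation_pow, Padic.valuation_pow, Padic.valuation_pow,
    show (3 : ℚ_[3]) = ((3 : ℕ) : ℚ_[3]) by norm_cast, Padic.valuation_p] at hv
  omega

theorem apply_eq_self_of_pow_six_eq_one {L F : Type*} [Field L] [FunLike F L L]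
    [RingHomClass F L L] (φ : F) {ω a : L} (hω : ω ^ 2 + ω + 1 = 0) (hφ : φ ω = ω)
    (ha : a ^ 6 = 1) : φ a = a := by
  have hω3 : ω ^ 3 = 1 := by linear_combination (ω - 1) * hω
  have h1 : (a - 1) * (a - ω) * (a - ω ^ 2) = a ^ 3 - 1 := by
    linear_combination (a * ω - a ^ 2) * hω - hω3
  have h2 : (a + 1) * (a + ω) * (a + ω ^ 2) = a ^ 3 + 1 := by
    linear_combination (a ^ 2 + a * ω) * hω + hω3
  have h : (a - 1) * (a - ω) * (a - ω ^ 2) * ((a + 1) * (a + ω) * (a + ω ^ 2)) = 0 := by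
    rw [h1, h2]; linear_combination ha
  simp only [mul_eq_zero, sub_eq_zero, add_eq_zero_iff_eq_neg] at h
  rcases h with ((rfl | rfl) | rfl) | ((rfl | rfl) | rfl) <;> simp [hφ]

section Galois

variable {K L : Type*} [Field K] [Field L] [Algebra K L]

theorem IsGalois.generator_apply_eq_sq [FiniteDimensional K L] [IsGalois K L]
    {σ : L ≃ₐ[K] L} (hσ : ∀ τ, τ ∈ Subgroup.zpowers σ) (hK : ∀ r : K, r ^ 2 + r + 1 ≠ 0)
    {ω : L} (hω : ω ^ 2 + ω + 1 = 0) : σ ω = ω ^ 2 := by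
  have hmoved : σ ω ≠ ω := fun hfix => by
    obtain ⟨r, hr⟩ := (IsGalois.mem_range_algebraMap_iff_fixed ω).mpr fun τ =>
      (Subgroup.zpowers_le (H := MulAction.stabilizer (L ≃ₐ[K] L) ω)).mpr hfix (hσ τ)
    exact hK r ((algebraMap K L).injective (by simp [hr, hω]))
  have hroot : σ ω ^ 2 + σ ω + 1 = 0 := by simpa using congrArg σ hω
  have h : (σ ω - ω) * (σ ω - ω ^ 2) = 0 := by
    linear_combination hroot + (ω - 1 - σ ω) * hω
  exact sub_eq_zero.mp ((mul_eq_zero.mp h).resolve_left (sub_ne_zero.mpr hmoved))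

theorem AlgEquiv.sq_apply_eq_self_of_apply_eq_sq {σ : L ≃ₐ[K] L} {ω : L}
    (hω : ω ^ 2 + ω + 1 = 0) (hσω : σ ω = ω ^ 2) : (σ ^ 2) ω = ω := by
  rw [pow_two, AlgEquiv.mul_apply, hσω, map_pow, hσω]
  linear_combination ω * (ω - 1) * hω

theorem exists_ne_zero_mul_apply_eq_self {ρ : L ≃ₐ[K] L} (hρ : IsOfFinOrder ρ) {ζ : L}
    (hζ : ζ ^ orderOf ρ = 1) (hρζ : ρ ζ = ζ) : ∃ y, y ≠ 0 ∧ ζ * ρ y = y := by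
  set n := orderOf ρ
  let f : L → L := fun c => ∑ i ∈ range n, ζ ^ i * (ρ ^ i) c
  have hf : ∀ c, ζ * ρ (f c) = f c := by
    intro c
    let g : ℕ → L := fun i => ζ ^ i * (ρ ^ i) c
    have hg : g n = g 0 := by
      simp only [g, hζ, show ρ ^ n = 1 from pow_orderOf_eq_one ρ, pow_zero]
    have hshift : ∀ i, ζ * ρ (g i) = g (i + 1) := fun i => by
      simp only [g, map_mul, map_pow, hρζ, pow_succ', AlgEquiv.mul_apply]; ring
    calc ζ * ρ (f c) = ∑ i ∈ range n, g (i + 1) := by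
          simp only [f, map_sum, mul_sum]
          exact sum_congr rfl fun i _ => hshift i
      _ = ∑ i ∈ range n, g i := by
          have h := sum_range_succ' g n
          rw [sum_range_succ, hg] at h
          exact add_right_cancel h.symm
  -- Dedekind: the characters `ρ ^ i`, `i < n`, are distinct, hence linearly independent.
  obtain ⟨c, hc⟩ : ∃ c, f c ≠ 0 := by
    by_contra! hzero
    let e : Fin n → (L →* L) := fun i => (ρ ^ (i : ℕ) : L ≃ₐ[K] L)
    have he : Function.Injective e := fun i j hij =>
      Fin.ext (pow_injOn_Iio_orderOf i.2 j.2 (AlgEquiv.ext fun x => DFunLike.congr_fun hij x))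
    have hind := Fintype.linearIndependent_iff.mp ((linearIndependent_monoidHom L L).comp e he)
      (fun i => ζ ^ (i : ℕ)) (funext fun c => by
        rw [Finset.sum_apply]
        simp only [Pi.smul_apply, smul_eq_mul, Function.comp_apply, e, MonoidHom.coe_coe,
          Pi.zero_apply]
        rw [Fin.sum_univ_eq_sum_range (fun i => ζ ^ i * (ρ ^ i) c)]
        exact hzero c)
      ⟨0, hρ.orderOf_pos⟩
    simp at hind
  exact ⟨f c, hc, hf c⟩

theorem map_eq_one_of_val_eq_mul_apply {R : Type*} [CommRing R] [Algebra R L]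
    {S : Subalgebra R L} {χ : Sˣ →* Lˣ} {ρ : L ≃ₐ[K] L} {ω : L} (hω : ω ^ 2 + ω + 1 = 0)
    (hρω : ρ ω = ω) (hχ6 : ∀ u, χ u ^ 6 = 1)
    (hχρ : ∀ u v : Sˣ, ((v : S) : L) = ρ ((u : S) : L) → ((χ v : Lˣ) : L) = ρ (χ u : Lˣ))
    {U W : Sˣ} (hU : ((U : S) : L) = ((W : S) : L) * ρ ((U : S) : L)) : χ W = 1 := by
  have hWU : (((W⁻¹ * U : Sˣ) : S) : L) = ρ ((U : S) : L) := by
    rw [Units.val_mul, MulMemClass.coe_mul]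
    conv_lhs => rw [hU]
    rw [← mul_assoc, ← MulMemClass.coe_mul, Units.inv_mul, OneMemClass.coe_one, one_mul]
  have hfix : ρ ((χ U : Lˣ) : L) = χ U :=
    apply_eq_self_of_pow_six_eq_one ρ hω hρω <| by
      rw [← Units.val_pow_eq_pow_val, hχ6, Units.val_one]
  have h : χ (W⁻¹ * U) = χ U := Units.ext ((hχρ U _ hWU).trans hfix)
  rwa [map_mul, mul_eq_right, map_inv, inv_eq_one] at h

end Galois

section SpectralNorm

variable {K L : Type*} [NontriviallyNormedField K] [IsUltrametricDist K] [CompleteSpace K]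
  [Field L] [Algebra K L] [Algebra.IsAlgebraic K L]

theorem spectralNorm_inv (x : L) : spectralNorm K L x⁻¹ = (spectralNorm K L x)⁻¹ := by
  rcases eq_or_ne x 0 with rfl | hx
  · simp only [inv_zero, spectralNorm_zero]
  refine eq_inv_of_mul_eq_one_left ?_
  rw [← spectralAlgNorm_def, ← spectralAlgNorm_def, ← spectralAlgNorm_mul, inv_mul_cancel₀ hx,
    spectralAlgNorm_one]

theorem spectralNorm_algEquiv_apply_div_self (τ : L ≃ₐ[K] L) {y : L} (hy : y ≠ 0) :
    spectralNorm K L (τ y / y) = 1 := by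
  rw [div_eq_mul_inv, ← spectralAlgNorm_def, spectralAlgNorm_mul, spectralAlgNorm_def,
    spectralAlgNorm_def, spectralNorm_inv, ← spectralNorm_eq_of_equiv,
    mul_inv_cancel₀ (spectralNorm_zero_lt hy (Algebra.IsAlgebraic.isAlgebraic y)).ne']

end SpectralNorm

section Padic

variable {p : ℕ} [Fact p.Prime] {L : Type*} [Field L] [Algebra ℚ_[p] L] [Algebra ℤ_[p] L]
  [IsScalarTower ℤ_[p] ℚ_[p] L]

theorem isIntegral_of_spectralNorm_le_one {x : L} (hx : IsIntegral ℚ_[p] x)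
    (h : spectralNorm ℚ_[p] L x ≤ 1) : IsIntegral ℤ_[p] x := by
  have hcoeff := (spectralValue_le_one_iff (minpoly.monic hx)).mp h
  have hlifts : minpoly ℚ_[p] x ∈ lifts (algebraMap ℤ_[p] ℚ_[p]) :=
    (lifts_iff_coeff_lifts _).mpr fun n => ⟨⟨_, hcoeff n⟩, rfl⟩
  obtain ⟨q, hq, -, hqmonic⟩ := lifts_and_natDegree_eq_and_monic hlifts (minpoly.monic hx)
  refine ⟨q, hqmonic, ?_⟩
  rw [← aeval_def, ← aeval_map_algebraMap ℚ_[p], hq, minpoly.aeval]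

theorem exists_integralClosure_unit_of_spectralNorm_eq_one [Algebra.IsAlgebraic ℚ_[p] L]
    {x : L} (hx : spectralNorm ℚ_[p] L x = 1) :
    ∃ U : (integralClosure ℤ_[p] L)ˣ, ((U : integralClosure ℤ_[p] L) : L) = x := by
  have hx0 : x ≠ 0 := by rintro rfl; simp [spectralNorm_zero] at hx
  have hint : ∀ z : L, spectralNorm ℚ_[p] L z = 1 → IsIntegral ℤ_[p] z := fun z hz =>
    isIntegral_of_spectralNorm_le_one (Algebra.IsIntegral.isIntegral z) hz.le
  have hinv : spectralNorm ℚ_[p] L x⁻¹ = 1 := by rw [spectralNorm_inv, hx, inv_one]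
  exact ⟨⟨⟨x, hint x hx⟩, ⟨x⁻¹, hint _ hinv⟩, Subtype.ext (mul_inv_cancel₀ hx0),
    Subtype.ext (inv_mul_cancel₀ hx0)⟩, rfl⟩

theorem exists_integralClosure_unit_eq_mul_sq_apply [FiniteDimensional ℚ_[p] L]
    {σ : L ≃ₐ[ℚ_[p]] L} (hσ : orderOf σ = 6) {ω : L} (hω : ω ^ 2 + ω + 1 = 0)
    (hσω : σ ω = ω ^ 2) :
    ∃ U : (integralClosure ℤ_[p] L)ˣ,
      ((U : integralClosure ℤ_[p] L) : L) = ω * (σ ^ 2) ((U : integralClosure ℤ_[p] L) : L) := by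
  set ρ := σ ^ 2 with hρ
  have hρ3 : orderOf ρ = 3 := by
    rw [orderOf_pow_of_dvd two_ne_zero (by rw [hσ]; norm_num), hσ]
  obtain ⟨y, hy0, hy⟩ := exists_ne_zero_mul_apply_eq_self (ρ := ρ) (orderOf_pos_iff.mp (by omega))
    (by rw [hρ3]; linear_combination (ω - 1) * hω)
    (AlgEquiv.sq_apply_eq_self_of_apply_eq_sq hω hσω)
  obtain ⟨U, hU⟩ :=
    exists_integralClosure_unit_of_spectralNorm_eq_one (spectralNorm_algEquiv_apply_div_self σ hy0)
  refine ⟨U, ?_⟩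
  have hσy : σ y = ω ^ 2 * σ (ρ y) := by
    conv_lhs => rw [← hy]
    rw [map_mul, hσω]
  have hρσ : ρ (σ y) = σ (ρ y) := by
    rw [hρ, ← AlgEquiv.mul_apply, ← AlgEquiv.mul_apply, ← pow_succ, ← pow_succ']
  have hρy : ρ y ≠ 0 := (map_ne_zero ρ).mpr hy0
  rw [hU, map_div₀, hρσ, hσy, mul_div_assoc', div_eq_div_iff hy0 hρy]
  linear_combination ω * σ (ρ y) * hy

end Padic

/-- Let `M` be a degree-6 cyclic Galois extension of `ℚ₃` containing a primitive cube root
of unity `ω`, with ring of integers `𝒪_M = integralClosure ℤ₃ M`. If `χ : 𝒪_Mˣ → Mˣ` is a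
group homomorphism with `χ(u)⁶ = 1` for all `u` and `χ(τ(u)) = τ(χ(u))` for every
`τ ∈ Gal(M/ℚ₃)`, then `χ(ω) = 1`. -/
theorem stmt_18 (M : Type*) [Field M] [Algebra ℚ_[3] M]
    (hdeg : Module.finrank ℚ_[3] M = 6) [IsGalois ℚ_[3] M]
    (hcyc : IsCyclic (M ≃ₐ[ℚ_[3]] M))
    [Algebra ℤ_[3] M] [IsScalarTower ℤ_[3] ℚ_[3] M]
    (ω : M) (hω : ω ^ 2 + ω + 1 = 0)
    (χ : (integralClosure ℤ_[3] M)ˣ →* Mˣ)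
    (hχ6 : ∀ u : (integralClosure ℤ_[3] M)ˣ, (χ u) ^ 6 = 1)
    (hχτ : ∀ (τ : M ≃ₐ[ℚ_[3]] M) (u v : (integralClosure ℤ_[3] M)ˣ),
      ((v : integralClosure ℤ_[3] M) : M) = τ ((u : integralClosure ℤ_[3] M) : M) →
      ((χ v : Mˣ) : M) = τ ((χ u : Mˣ) : M)) :
    ∀ u : (integralClosure ℤ_[3] M)ˣ,
      ((u : integralClosure ℤ_[3] M) : M) = ω → χ u = 1 := by
  have : FiniteDimensional ℚ_[3] M := .of_finrank_pos (by omega)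
  intro W hW
  obtain ⟨σ, hσ⟩ := hcyc.exists_generator
  have hσ6 : orderOf σ = 6 := by
    rw [orderOf_eq_card_of_forall_mem_zpowers hσ, IsGalois.card_aut_eq_finrank, hdeg]
  have hσω : σ ω = ω ^ 2 := IsGalois.generator_apply_eq_sq hσ Padic.three_sq_add_add_one_ne_zero hω
  obtain ⟨U, hU⟩ := exists_integralClosure_unit_eq_mul_sq_apply hσ6 hω hσω
  exact map_eq_one_of_val_eq_mul_apply hω (AlgEquiv.sq_apply_eq_self_of_apply_eq_sq hω hσω) hχ6
    (hχτ _) (hW ▸ hU)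
end
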